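/- arXiv:2504.08693 — 17 statements merged into one kernel-verified Lean document; each statement's English description precedes it below -/
import Mathlib

section
/- Let H be a complex Hilbert space and φ : H →L[ℂ] H a finite potent continuous linear operator with index at most 1 (IsCompl (LinearMap.range φ) (LinearMap.ker φ)). If ψ : H →L[ℂ] H satisfies the Penrose equations φ ∘ ψ ∘ φ = φ, ψ ∘ φ ∘ ψ = ψ, (φ ∘ ψ)† = φ ∘ ψ and (ψ ∘ φ)† = ψ ∘ φ (where † is the Hilbert adjoint), then ψ is finite potent and has index at most 1, i.e. there exists n with the range of ψ^n finite-dimensional and IsCompl (LinearMap.range ψ) (LinearMap.ker ψ). -/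
/-!
The Penrose equations give `φ† = (φ ψ φ)† = φ† φ ψ` and likewise `ψ† = ψ† ψ φ`, hence
`ker ψ ⊆ ker φ† = (range φ)ᗮ` and `ker φ ⊆ (range ψ)ᗮ`. So `range ψ ∩ ker ψ` is orthogonal to
`range φ + ker φ = H`, i.e. trivial.

Index at most one means that `φ` maps its range onto itself, so `range φ = φ (range φⁿ)` is
finite-dimensional, and so is `range ψ = ψ φ (range ψ) ⊆ ψ (range φ)`. Finally, an endomorphism with
finite-dimensional range meeting its kernel trivially is injective, hence surjective, on its range,
which makes range and kernel complementary.
-/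

namespace LinearMap

section Semiring

variable {R M : Type*} [Semiring R] [AddCommMonoid M] [Module R M] {f : M →ₗ[R] M}

theorem map_range_eq_range_of_codisjoint (h : Codisjoint (range f) (ker f)) :
    (range f).map f = range f := by
  have hker : (ker f).map f = ⊥ := eq_bot_iff.mpr (Submodule.map_le_iff_le_comap.mpr le_rfl)
  conv_rhs => rw [range_eq_map, ← h.eq_top, Submodule.map_sup, hker, sup_bot_eq]

theorem range_eq_map_range_pow (h : (range f).map f = range f) (n : ℕ) :
    range f = (range (f ^ n)).map f := by
  induction n with
  | zero => rw [pow_zero, Module.End.one_eq_id, range_id, ← range_eq_map]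
  | succ n ih => rw [pow_succ', Module.End.mul_eq_comp, range_comp, ← ih, h]

theorem range_le_map_range_of_comp_comp_eq {N : Type*} [AddCommMonoid N] [Module R N]
    {g : M →ₗ[R] N} {h : N →ₗ[R] M} (hhgh : h ∘ₗ g ∘ₗ h = h) : range h ≤ (range g).map h := by
  rw [← range_comp]
  conv_lhs => rw [← hhgh]
  exact range_comp_le_range h (h ∘ₗ g)

end Semiring

theorem codisjoint_range_ker_of_map_range_eq {R M : Type*} [Ring R] [AddCommGroup M] [Module R M]
    {f : M →ₗ[R] M} (h : (range f).map f = range f) :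
    Codisjoint (range f) (ker f) := by
  refine codisjoint_iff_le_sup.mpr fun x _ ↦ ?_
  obtain ⟨y, hy, hfy⟩ : f x ∈ (range f).map f := by rw [h]; exact mem_range_self f x
  exact Submodule.mem_sup.mpr ⟨y, hy, x - y, by simp [hfy], add_sub_cancel y x⟩

variable {K V : Type*} [DivisionRing K] [AddCommGroup V] [Module K V] {f : V →ₗ[K] V}

theorem map_range_eq_range_of_disjoint [FiniteDimensional K (range f)]
    (h : Disjoint (range f) (ker f)) : (range f).map f = range f := by
  let g : range f →ₗ[K] range f := f.restrict fun x _ ↦ mem_range_self f x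
  have hg : Function.Injective g := by
    refine (injective_iff_map_eq_zero g).mpr fun x hx ↦ Subtype.ext ?_
    exact Submodule.disjoint_def.mp h x x.2 (congrArg Subtype.val hx)
  refine le_antisymm (Submodule.map_le_iff_le_comap.mpr fun x _ ↦ mem_range_self f x) ?_
  intro y hy
  obtain ⟨x, hx⟩ := injective_iff_surjective.mp hg ⟨y, hy⟩
  exact ⟨x, x.2, congrArg Subtype.val hx⟩

theorem isCompl_range_ker_of_disjoint [FiniteDimensional K (range f)]
    (h : Disjoint (range f) (ker f)) : IsCompl (range f) (ker f) :=
  ⟨h, codisjoint_range_ker_of_map_range_eq (map_range_eq_range_of_disjoint h)⟩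

end LinearMap

namespace ContinuousLinearMap

variable {𝕜 E F : Type*} [RCLike 𝕜] [NormedAddCommGroup E] [InnerProductSpace 𝕜 E] [CompleteSpace E]
  [NormedAddCommGroup F] [InnerProductSpace 𝕜 F] [CompleteSpace F]

theorem ker_le_ker_adjoint_of_comp_comp_eq {T : E →L[𝕜] F} {S : F →L[𝕜] E}
    (hTST : T ∘L S ∘L T = T) (hTS : adjoint (T ∘L S) = T ∘L S) :
    LinearMap.ker (S : F →ₗ[𝕜] E) ≤ LinearMap.ker (adjoint T : F →ₗ[𝕜] E) := by
  have hadj : adjoint T = adjoint T ∘L T ∘L S := by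
    conv_lhs => rw [← hTST, ← comp_assoc, adjoint_comp, hTS]
  rw [hadj]
  exact LinearMap.ker_le_ker_comp (S : F →ₗ[𝕜] E) ((adjoint T ∘L T : E →L[𝕜] E) : E →ₗ[𝕜] E)

theorem disjoint_range_ker_of_moorePenrose {T S : E →L[𝕜] E} (hTST : T ∘L S ∘L T = T)
    (hSTS : S ∘L T ∘L S = S) (hTS : adjoint (T ∘L S) = T ∘L S) (hST : adjoint (S ∘L T) = S ∘L T)
    (hT : Codisjoint (LinearMap.range (T : E →ₗ[𝕜] E)) (LinearMap.ker (T : E →ₗ[𝕜] E))) :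
    Disjoint (LinearMap.range (S : E →ₗ[𝕜] E)) (LinearMap.ker (S : E →ₗ[𝕜] E)) := by
  have hrange : LinearMap.range (S : E →ₗ[𝕜] E) ≤ (LinearMap.ker (T : E →ₗ[𝕜] E))ᗮ := by
    refine (Submodule.le_orthogonal_orthogonal _).trans (Submodule.orthogonal_le ?_)
    rw [orthogonal_range]
    exact ker_le_ker_adjoint_of_comp_comp_eq hSTS hST
  have hker : LinearMap.ker (S : E →ₗ[𝕜] E) ≤ (LinearMap.range (T : E →ₗ[𝕜] E))ᗮ := by
    rw [orthogonal_range]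
    exact ker_le_ker_adjoint_of_comp_comp_eq hTST hTS
  rw [disjoint_iff, eq_bot_iff]
  calc _ ≤ (LinearMap.ker (T : E →ₗ[𝕜] E))ᗮ ⊓ (LinearMap.range (T : E →ₗ[𝕜] E))ᗮ :=
        inf_le_inf hrange hker
    _ = ⊥ := by rw [Submodule.inf_orthogonal, sup_comm, hT.eq_top, Submodule.top_orthogonal_eq_bot]

end ContinuousLinearMap

theorem core_stmt1 {H : Type*} [NormedAddCommGroup H] [InnerProductSpace ℂ H]
    [CompleteSpace H] (φ ψ : H →L[ℂ] H)
    (hfp : ∃ n : ℕ, FiniteDimensional ℂ (LinearMap.range ((φ ^ n : H →L[ℂ] H) : H →ₗ[ℂ] H)))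
    (hidx : IsCompl (LinearMap.range (φ : H →ₗ[ℂ] H)) (LinearMap.ker (φ : H →ₗ[ℂ] H)))
    (h1 : φ ∘L ψ ∘L φ = φ)
    (h2 : ψ ∘L φ ∘L ψ = ψ)
    (h3 : ContinuousLinearMap.adjoint (φ ∘L ψ) = φ ∘L ψ)
    (h4 : ContinuousLinearMap.adjoint (ψ ∘L φ) = ψ ∘L φ) :
    (∃ n : ℕ, FiniteDimensional ℂ (LinearMap.range ((ψ ^ n : H →L[ℂ] H) : H →ₗ[ℂ] H))) ∧
      IsCompl (LinearMap.range (ψ : H →ₗ[ℂ] H)) (LinearMap.ker (ψ : H →ₗ[ℂ] H)) := by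
  obtain ⟨n, hn⟩ := hfp
  have : FiniteDimensional ℂ (LinearMap.range (φ : H →ₗ[ℂ] H)) := by
    rw [ContinuousLinearMap.toLinearMap_pow] at hn
    rw [LinearMap.range_eq_map_range_pow
      (LinearMap.map_range_eq_range_of_codisjoint hidx.codisjoint) n]
    infer_instance
  have : FiniteDimensional ℂ (LinearMap.range (ψ : H →ₗ[ℂ] H)) :=
    Submodule.finiteDimensional_of_le
      (LinearMap.range_le_map_range_of_comp_comp_eq (congrArg ContinuousLinearMap.toLinearMap h2))
  exact ⟨⟨1, by rwa [pow_one]⟩, LinearMap.isCompl_range_ker_of_disjoint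
    (ContinuousLinearMap.disjoint_range_ker_of_moorePenrose h1 h2 h3 h4 hidx.codisjoint)⟩
end

section
/- Let 𝕜 be ℝ or ℂ, V an inner product space over 𝕜, and φ : V →ₗ[𝕜] V a finite potent endomorphism. If X : V →ₗ[𝕜] V is a core inverse of φ, then LinearMap.range φ = LinearMap.range (φ^n) for every n ≥ 1, and φ has index at most 1, i.e. IsCompl (LinearMap.range φ) (LinearMap.ker φ). -/
theorem core_stmt2 {𝕜 : Type*} [RCLike 𝕜] {V : Type*} [NormedAddCommGroup V]
    [InnerProductSpace 𝕜 V] (φ X : V →ₗ[𝕜] V)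
    (hfp : ∃ n : ℕ, FiniteDimensional 𝕜 (LinearMap.range (φ ^ n)))
    (hX1 : ∀ v : V, v - φ (X v) ∈ (LinearMap.range φ)ᗮ)
    (hX2 : LinearMap.range X ≤ LinearMap.range φ) :
    (∀ n : ℕ, 1 ≤ n → LinearMap.range φ = LinearMap.range (φ ^ n)) ∧
      IsCompl (LinearMap.range φ) (LinearMap.ker φ) := by
  -- key: φ (X w) = w for w ∈ range φ
  have key : ∀ w ∈ LinearMap.range φ, φ (X w) = w := by
    intro w hw
    have h1 : w - φ (X w) ∈ LinearMap.range φ :=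
      Submodule.sub_mem _ hw ⟨X w, rfl⟩
    have h0 : w - φ (X w) ∈ (⊥ : Submodule 𝕜 V) :=
      ((LinearMap.range φ).orthogonal_disjoint.symm.le_bot) ⟨hX1 w, h1⟩
    have : w - φ (X w) = 0 := h0
    have := sub_eq_zero.mp this
    exact this.symm
  -- range φ = range φ²
  have h2 : LinearMap.range φ = LinearMap.range (φ * φ) := by
    apply le_antisymm
    · rintro w hw
      obtain ⟨u, hu⟩ := hX2 ⟨w, rfl⟩
      refine ⟨u, ?_⟩
      show φ (φ u) = w
      rw [hu, key w hw]
    · rintro w ⟨u, rfl⟩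
      exact ⟨φ u, rfl⟩
  -- range φ = range φ^n for n ≥ 1
  have hpow : ∀ n : ℕ, 1 ≤ n → LinearMap.range φ = LinearMap.range (φ ^ n) := by
    intro n hn
    induction n with
    | zero => omega
    | succ m ih =>
      rcases Nat.eq_zero_or_pos m with hm | hm
      · subst hm; simp [pow_one]
      · have ihm := ih hm
        have : φ ^ (m + 1) = φ * φ ^ m := by rw [pow_succ']
        rw [this, Module.End.mul_eq_comp, LinearMap.range_comp, ← ihm,
          ← LinearMap.range_comp, ← Module.End.mul_eq_comp, ← h2]
  -- range φ is finite dimensional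
  have hfd : FiniteDimensional 𝕜 (LinearMap.range φ) := by
    obtain ⟨n, hn⟩ := hfp
    rcases Nat.eq_zero_or_pos n with h0 | h0
    · subst h0
      have htop : LinearMap.range (φ ^ (0 : ℕ)) = ⊤ := by simp [Module.End.one_eq_id]
      rw [htop] at hn
      haveI := hn
      have : FiniteDimensional 𝕜 V :=
        (Submodule.topEquiv (R := 𝕜) (M := V)).finiteDimensional
      infer_instance
    · rw [hpow n h0]; exact hn
  refine ⟨hpow, ?_⟩
  -- restriction of φ to range φ
  have hmap : ∀ x ∈ LinearMap.range φ, φ x ∈ LinearMap.range φ := fun x _ => ⟨x, rfl⟩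
  set f : LinearMap.range φ →ₗ[𝕜] LinearMap.range φ := φ.restrict hmap with hf
  have hsurj : Function.Surjective f := by
    rintro ⟨y, hy⟩
    rw [h2] at hy
    obtain ⟨u, hu⟩ := hy
    refine ⟨⟨φ u, ⟨u, rfl⟩⟩, ?_⟩
    apply Subtype.ext
    simpa [hf, LinearMap.restrict_apply] using hu
  have hinj : Function.Injective f :=
    (LinearMap.injective_iff_surjective).mpr hsurj
  constructor
  · rw [Submodule.disjoint_def]
    intro x hx hker
    have : f ⟨x, hx⟩ = 0 := by
      apply Subtype.ext
      simpa [hf, LinearMap.restrict_apply] using hker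
    have := hinj (a₁ := ⟨x, hx⟩) (a₂ := 0) (by simpa using this)
    simpa using congrArg Subtype.val this
  · rw [codisjoint_iff, eq_top_iff]
    intro v _
    have hv : φ v ∈ LinearMap.range (φ * φ) := by rw [← h2]; exact ⟨v, rfl⟩
    obtain ⟨u, hu⟩ := hv
    have hker : v - φ u ∈ LinearMap.ker φ := by
      simp only [LinearMap.mem_ker, map_sub]
      have : φ (φ u) = φ v := hu
      rw [this, sub_self]
    have : v = φ u + (v - φ u) := by abel
    rw [this]
    exact Submodule.add_mem_sup ⟨u, rfl⟩ hker
end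

section
/- Let 𝕜 be ℝ or ℂ, V an inner product space over 𝕜, and φ : V →ₗ[𝕜] V a finite potent endomorphism. If X₁ and X₂ are both core inverses of φ, then X₁ = X₂. Moreover, any core inverse X of φ is itself finite potent and has index at most 1: the range of X is finite-dimensional and IsCompl (LinearMap.range X) (LinearMap.ker X). -/
theorem core_stmt3 {𝕜 : Type*} [RCLike 𝕜] {V : Type*} [NormedAddCommGroup V]
    [InnerProductSpace 𝕜 V] (φ X₁ X₂ : V →ₗ[𝕜] V)
    (hfp : ∃ n : ℕ, FiniteDimensional 𝕜 (LinearMap.range (φ ^ n)))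
    (hX₁1 : ∀ v : V, v - φ (X₁ v) ∈ (LinearMap.range φ)ᗮ)
    (hX₁2 : LinearMap.range X₁ ≤ LinearMap.range φ)
    (hX₂1 : ∀ v : V, v - φ (X₂ v) ∈ (LinearMap.range φ)ᗮ)
    (hX₂2 : LinearMap.range X₂ ≤ LinearMap.range φ) :
    X₁ = X₂ ∧ FiniteDimensional 𝕜 (LinearMap.range X₁) ∧
      IsCompl (LinearMap.range X₁) (LinearMap.ker X₁) := by
  set W := LinearMap.range φ with hWdef
  have hzero : ∀ x : V, x ∈ W → x ∈ Wᗮ → x = 0 := by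
    intro x hx hx'
    exact (Submodule.mem_bot 𝕜).mp (W.orthogonal_disjoint.le_bot ⟨hx, hx'⟩)
  -- φ ∘ X acts as identity on W
  have key : ∀ (X : V →ₗ[𝕜] V), (∀ v, v - φ (X v) ∈ Wᗮ) → ∀ w ∈ W, φ (X w) = w := by
    intro X h1 w hw
    have h := hzero (w - φ (X w)) (W.sub_mem hw (LinearMap.mem_range_self φ _)) (h1 w)
    exact (sub_eq_zero.mp h).symm
  have hle : ∀ k : ℕ, W ≤ LinearMap.range (φ ^ (k + 1)) := by
    intro k
    induction k with
    | zero => simp [pow_one, hWdef]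
    | succ k ih =>
      intro w hw
      obtain ⟨u, hu⟩ := ih (hX₁2 (LinearMap.mem_range_self X₁ w))
      refine ⟨u, ?_⟩
      have h2 : (φ ^ (k + 1 + 1)) u = φ ((φ ^ (k + 1)) u) := by
        rw [pow_succ']; rfl
      rw [h2, hu, key X₁ hX₁1 w hw]
  obtain ⟨n, hn⟩ := hfp
  have hWfin : FiniteDimensional 𝕜 W := by
    have h1 : W ≤ LinearMap.range (φ ^ (n + 1)) := hle n
    have h2 : LinearMap.range (φ ^ (n + 1)) ≤ LinearMap.range (φ ^ n) := by
      rw [pow_succ, Module.End.mul_eq_comp]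
      exact LinearMap.range_comp_le_range _ _
    exact Submodule.finiteDimensional_of_le (h1.trans h2)
  -- φ is injective on W
  have hmaps : ∀ x ∈ W, φ x ∈ W := fun x _ => LinearMap.mem_range_self φ x
  have hker : ∀ x ∈ W, φ x = 0 → x = 0 := by
    haveI := hWfin
    set f : W →ₗ[𝕜] W := φ.restrict hmaps with hf
    have hsurj : Function.Surjective f := by
      rintro ⟨w, hw⟩
      refine ⟨⟨X₁ w, hX₁2 (LinearMap.mem_range_self X₁ w)⟩, ?_⟩
      apply Subtype.ext
      simpa [hf, LinearMap.restrict_apply] using key X₁ hX₁1 w hw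
    have hinj : Function.Injective f := (LinearMap.injective_iff_surjective).mpr hsurj
    intro x hx h0
    have hfx : f ⟨x, hx⟩ = f 0 := by
      apply Subtype.ext
      simp [hf, LinearMap.restrict_apply, h0]
    have := hinj hfx
    simpa using Subtype.ext_iff.mp this
  -- uniqueness
  have hXeq : X₁ = X₂ := by
    ext v
    have hmemo : (v - φ (X₂ v)) - (v - φ (X₁ v)) ∈ Wᗮ := Wᗮ.sub_mem (hX₂1 v) (hX₁1 v)
    rw [sub_sub_sub_cancel_left] at hmemo
    have hφ : φ (X₁ v) - φ (X₂ v) = 0 :=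
      hzero _ (W.sub_mem (LinearMap.mem_range_self φ _) (LinearMap.mem_range_self φ _)) hmemo
    have hd : X₁ v - X₂ v = 0 := by
      refine hker _ (W.sub_mem (hX₁2 (LinearMap.mem_range_self X₁ v))
        (hX₂2 (LinearMap.mem_range_self X₂ v))) ?_
      rw [map_sub, hφ]
    exact sub_eq_zero.mp hd
  -- range X₁ = W
  have hrange : LinearMap.range X₁ = W := by
    refine le_antisymm hX₁2 ?_
    intro w hw
    refine ⟨φ w, ?_⟩
    have h1 : φ (X₁ (φ w)) = φ w := key X₁ hX₁1 (φ w) (LinearMap.mem_range_self φ w)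
    have hd : X₁ (φ w) - w = 0 := by
      refine hker _ (W.sub_mem (hX₁2 (LinearMap.mem_range_self X₁ _)) hw) ?_
      rw [map_sub, h1, sub_self]
    exact sub_eq_zero.mp hd
  -- ker X₁ = Wᗮ
  have hkerX : LinearMap.ker X₁ = Wᗮ := by
    ext v
    constructor
    · intro hv
      have h0 : X₁ v = 0 := hv
      have := hX₁1 v
      rw [h0, map_zero, sub_zero] at this
      exact this
    · intro hv
      have hmem : v - (v - φ (X₁ v)) ∈ Wᗮ := Wᗮ.sub_mem hv (hX₁1 v)
      rw [sub_sub_cancel] at hmem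
      have h0 : φ (X₁ v) = 0 := hzero _ (LinearMap.mem_range_self φ _) hmem
      exact hker (X₁ v) (hX₁2 (LinearMap.mem_range_self X₁ v)) h0
  haveI := hWfin
  have hcompl : IsCompl W Wᗮ := Submodule.isCompl_orthogonal_of_hasOrthogonalProjection
  refine ⟨hXeq, ?_, ?_⟩
  · rw [hrange]; exact hWfin
  · rw [hrange, hkerX]; exact hcompl
end

section
/- Let 𝕜 be ℝ or ℂ, V an inner product space over 𝕜, and φ : V →ₗ[𝕜] V a finite potent endomorphism with index at most 1 (IsCompl (LinearMap.range φ) (LinearMap.ker φ)). If ψ : V →ₗ[𝕜] V is a Moore–Penrose inverse of φ and χ : V →ₗ[𝕜] V is a group inverse of φ, then the composition χ ∘ φ ∘ ψ is a core inverse of φ: for every v ∈ V, v - φ ((χ ∘ φ ∘ ψ) v) ∈ (LinearMap.range φ)ᗮ, and LinearMap.range (χ ∘ φ ∘ ψ) ≤ LinearMap.range φ. -/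
/-!
Since `φ χ φ = φ`, the map `φ (χ φ ψ)` equals `φ ψ`, which for a Moore–Penrose inverse is the
orthogonal projection onto `range φ`. A group inverse satisfies `χ = χ φ χ = φ χ χ`, so
`range (χ φ ψ) ⊆ range χ ⊆ range φ`.
-/

section MoorePenrose

variable {𝕜 E F : Type*} [RCLike 𝕜] [AddCommGroup E] [Module 𝕜 E]
  [NormedAddCommGroup F] [InnerProductSpace 𝕜 F]

theorem LinearMap.sub_apply_comp_mem_orthogonal_range {φ : E →ₗ[𝕜] F} {ψ : F →ₗ[𝕜] E}
    (hinner : φ ∘ₗ ψ ∘ₗ φ = φ) (hsymm : (φ ∘ₗ ψ).IsSymmetric) (v : F) :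
    v - φ (ψ v) ∈ (LinearMap.range φ)ᗮ := by
  rw [Submodule.mem_orthogonal]
  rintro _ ⟨u, rfl⟩
  have hfix : φ (ψ (φ u)) = φ u := LinearMap.congr_fun hinner u
  have hsymm_u : inner 𝕜 (φ u) v = inner 𝕜 (φ u) (φ (ψ v)) := by
    simpa only [LinearMap.comp_apply, hfix] using hsymm (φ u) v
  rw [inner_sub_right, hsymm_u, sub_self]

end MoorePenrose

section GroupInverse

variable {R M : Type*} [Semiring R] [AddCommMonoid M] [Module R M]

theorem LinearMap.range_le_range_of_comp_comp_eq_of_comm {φ χ : M →ₗ[R] M}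
    (hχ : χ ∘ₗ φ ∘ₗ χ = χ) (hcomm : φ ∘ₗ χ = χ ∘ₗ φ) :
    LinearMap.range χ ≤ LinearMap.range φ := by
  rintro _ ⟨u, rfl⟩
  refine ⟨χ (χ u), ?_⟩
  calc φ (χ (χ u)) = χ (φ (χ u)) := LinearMap.congr_fun hcomm (χ u)
    _ = χ u := LinearMap.congr_fun hχ u

end GroupInverse

theorem core_stmt4_general {𝕜 : Type*} [RCLike 𝕜] {V : Type*} [NormedAddCommGroup V]
    [InnerProductSpace 𝕜 V] (φ ψ χ : V →ₗ[𝕜] V)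
    (hmp1 : φ ∘ₗ ψ ∘ₗ φ = φ)
    (hmp3 : ∀ u w : V, (inner 𝕜 ((φ ∘ₗ ψ) u) w : 𝕜) = inner 𝕜 u ((φ ∘ₗ ψ) w))
    (hg1 : φ ∘ₗ χ ∘ₗ φ = φ)
    (hg2 : χ ∘ₗ φ ∘ₗ χ = χ)
    (hg3 : φ ∘ₗ χ = χ ∘ₗ φ) :
    (∀ v : V, v - φ ((χ ∘ₗ φ ∘ₗ ψ) v) ∈ (LinearMap.range φ)ᗮ) ∧
      LinearMap.range (χ ∘ₗ φ ∘ₗ ψ) ≤ LinearMap.range φ := by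
  refine ⟨fun v => ?_, ?_⟩
  · have hproj : φ ((χ ∘ₗ φ ∘ₗ ψ) v) = φ (ψ v) := LinearMap.congr_fun hg1 (ψ v)
    rw [hproj]
    exact LinearMap.sub_apply_comp_mem_orthogonal_range hmp1 hmp3 v
  · exact (LinearMap.range_comp_le_range _ χ).trans
      (LinearMap.range_le_range_of_comp_comp_eq_of_comm hg2 hg3)

theorem core_stmt4 {𝕜 : Type*} [RCLike 𝕜] {V : Type*} [NormedAddCommGroup V]
    [InnerProductSpace 𝕜 V] (φ ψ χ : V →ₗ[𝕜] V)
    (hfp : ∃ n : ℕ, FiniteDimensional 𝕜 (LinearMap.range (φ ^ n)))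
    (hidx : IsCompl (LinearMap.range φ) (LinearMap.ker φ))
    (hmp1 : φ ∘ₗ ψ ∘ₗ φ = φ)
    (hmp2 : ψ ∘ₗ φ ∘ₗ ψ = ψ)
    (hmp3 : ∀ u w : V, (inner 𝕜 ((φ ∘ₗ ψ) u) w : 𝕜) = inner 𝕜 u ((φ ∘ₗ ψ) w))
    (hmp4 : ∀ u w : V, (inner 𝕜 ((ψ ∘ₗ φ) u) w : 𝕜) = inner 𝕜 u ((ψ ∘ₗ φ) w))
    (hg1 : φ ∘ₗ χ ∘ₗ φ = φ)
    (hg2 : χ ∘ₗ φ ∘ₗ χ = χ)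
    (hg3 : φ ∘ₗ χ = χ ∘ₗ φ) :
    (∀ v : V, v - φ ((χ ∘ₗ φ ∘ₗ ψ) v) ∈ (LinearMap.range φ)ᗮ) ∧
      LinearMap.range (χ ∘ₗ φ ∘ₗ ψ) ≤ LinearMap.range φ :=
  core_stmt4_general φ ψ χ hmp1 hmp3 hg1 hg2 hg3
end

section
/- Let 𝕜 be ℝ or ℂ, V an inner product space over 𝕜, and φ : V →ₗ[𝕜] V a finite potent endomorphism with index at most 1 (IsCompl (LinearMap.range φ) (LinearMap.ker φ)). Then X : V →ₗ[𝕜] V is a core inverse of φ if and only if: (a) for every v ∈ LinearMap.range φ, X v ∈ LinearMap.range φ and φ (X v) = v, and (b) for every v ∈ (LinearMap.range φ)ᗮ, X v = 0. -/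
theorem core_stmt5 {𝕜 : Type*} [RCLike 𝕜] {V : Type*} [NormedAddCommGroup V]
    [InnerProductSpace 𝕜 V] (φ X : V →ₗ[𝕜] V)
    (hfp : ∃ n : ℕ, FiniteDimensional 𝕜 (LinearMap.range (φ ^ n)))
    (hidx : IsCompl (LinearMap.range φ) (LinearMap.ker φ)) :
    ((∀ v : V, v - φ (X v) ∈ (LinearMap.range φ)ᗮ) ∧
        LinearMap.range X ≤ LinearMap.range φ) ↔
      ((∀ v ∈ LinearMap.range φ, X v ∈ LinearMap.range φ ∧ φ (X v) = v) ∧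
        (∀ v ∈ (LinearMap.range φ)ᗮ, X v = 0)) := by
  have hdisj : Disjoint (LinearMap.range φ) (LinearMap.range φ)ᗮ :=
    Submodule.orthogonal_disjoint _
  constructor
  · rintro ⟨h1, h2⟩
    constructor
    · intro v hv
      have hX : X v ∈ LinearMap.range φ := h2 ⟨v, rfl⟩
      refine ⟨hX, ?_⟩
      have hmem : v - φ (X v) ∈ LinearMap.range φ :=
        Submodule.sub_mem _ hv ⟨X v, rfl⟩
      have := (Submodule.disjoint_def.mp hdisj) _ hmem (h1 v)
      have : v - φ (X v) = 0 := this
      linear_combination (norm := module) -this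
    · intro v hv
      have hX : X v ∈ LinearMap.range φ := h2 ⟨v, rfl⟩
      have hmem : φ (X v) ∈ (LinearMap.range φ)ᗮ := by
        have : φ (X v) = v - (v - φ (X v)) := by module
        rw [this]
        exact Submodule.sub_mem _ hv (h1 v)
      have h0 : φ (X v) = 0 :=
        (Submodule.disjoint_def.mp hdisj) _ ⟨X v, rfl⟩ hmem
      have hker : X v ∈ LinearMap.ker φ := h0
      exact (Submodule.disjoint_def.mp hidx.disjoint) _ hX hker
  · rintro ⟨h1, h2⟩
    -- range φ is finite-dimensional
    have hmap : Submodule.map φ (LinearMap.range φ) = LinearMap.range φ := by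
      apply le_antisymm
      · rintro y ⟨x, _, rfl⟩; exact ⟨x, rfl⟩
      · rintro y ⟨x, rfl⟩
        have hx : x ∈ LinearMap.range φ ⊔ LinearMap.ker φ := by
          rw [hidx.sup_eq_top]; trivial
        obtain ⟨a, ha, b, hb, rfl⟩ := Submodule.mem_sup.mp hx
        have : φ (a + b) = φ a := by
          simp [map_add, LinearMap.mem_ker.mp hb]
        rw [this]
        exact ⟨a, ha, rfl⟩
    have hpow : ∀ n : ℕ, LinearMap.range (φ ^ (n + 1)) = LinearMap.range φ := by
      intro n
      induction n with
      | zero => simp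
      | succ m ih =>
        have : φ ^ (m + 2) = φ * φ ^ (m + 1) := by rw [pow_succ']
        rw [this]
        show LinearMap.range (φ ∘ₗ φ ^ (m + 1)) = _
        rw [LinearMap.range_comp, ih, hmap]
    have hfd : FiniteDimensional 𝕜 (LinearMap.range φ) := by
      obtain ⟨n, hn⟩ := hfp
      rcases n with _ | m
      · have htop : LinearMap.range (φ ^ 0) = ⊤ := by simp [Module.End.one_eq_id]
        rw [htop] at hn
        have : FiniteDimensional 𝕜 V := by
          exact Module.Finite.equiv (Submodule.topEquiv)
        infer_instance
      · rwa [hpow m] at hn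
    haveI := hfd
    haveI : CompleteSpace (LinearMap.range φ) := FiniteDimensional.complete 𝕜 _
    have hcompl : IsCompl (LinearMap.range φ) (LinearMap.range φ)ᗮ :=
      Submodule.isCompl_orthogonal_of_hasOrthogonalProjection
    constructor
    · intro v
      have hv : v ∈ LinearMap.range φ ⊔ (LinearMap.range φ)ᗮ := by
        rw [hcompl.sup_eq_top]; trivial
      obtain ⟨a, ha, b, hb, hab⟩ := Submodule.mem_sup.mp hv
      have hXv : X v = X a := by
        rw [← hab, map_add, h2 b hb, add_zero]
      have : φ (X v) = a := by rw [hXv]; exact (h1 a ha).2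
      rw [this, ← hab]
      simpa using hb
    · rintro y ⟨v, rfl⟩
      have hv : v ∈ LinearMap.range φ ⊔ (LinearMap.range φ)ᗮ := by
        rw [hcompl.sup_eq_top]; trivial
      obtain ⟨a, ha, b, hb, hab⟩ := Submodule.mem_sup.mp hv
      have hXv : X v = X a := by
        rw [← hab, map_add, h2 b hb, add_zero]
      rw [hXv]
      exact (h1 a ha).1
end

section
/- Let 𝕜 be ℝ or ℂ, V an inner product space over 𝕜, and φ : V →ₗ[𝕜] V a finite potent endomorphism. Then there exists a core inverse of φ if and only if φ has index at most 1, i.e. IsCompl (LinearMap.range φ) (LinearMap.ker φ). -/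
/-! Both conditions force `φ` to map `range φ` onto itself. Then `range φ ≤ range (φ ^ n)` for
every `n`, so finite potency makes `range φ` finite-dimensional, and the restriction of `φ` to
`range φ`, being surjective, is bijective: this is `IsCompl (range φ) (ker φ)`. Conversely a
core inverse is a right inverse of that restriction composed with the orthogonal projection
onto `range φ`. -/

open Function LinearMap Submodule

namespace LinearMap

section Ring

variable {R M : Type*} [Ring R] [AddCommGroup M] [Module R M] (φ : M →ₗ[R] M)

abbrev restrictRange : range φ →ₗ[R] range φ :=
  φ.restrict fun x _ ↦ mem_range_self φ x

theorem surjective_restrictRange_iff :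
    Surjective φ.restrictRange ↔ (range φ).map φ = range φ := by
  refine ⟨fun h ↦ le_antisymm map_le_range fun y hy ↦ ?_, fun h ↦ ?_⟩
  · obtain ⟨x, hx⟩ := h ⟨y, hy⟩
    exact ⟨x, x.2, congrArg Subtype.val hx⟩
  · rintro ⟨y, hy⟩
    obtain ⟨x, hx, rfl⟩ := h.symm ▸ hy
    exact ⟨⟨x, hx⟩, rfl⟩

theorem injective_restrictRange_iff :
    Injective φ.restrictRange ↔ Disjoint (range φ) (ker φ) := by
  rw [← LinearMap.ker_eq_bot, Submodule.disjoint_def, Submodule.eq_bot_iff]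
  refine ⟨fun h v hv hvk ↦ ?_, fun h v hv ↦ ?_⟩
  · exact congrArg Subtype.val (h ⟨v, hv⟩ (Subtype.ext (mem_ker.mp hvk)))
  · exact Subtype.ext (h v v.2 (congrArg Subtype.val (mem_ker.mp hv)))

theorem codisjoint_range_ker_iff_map_range_eq :
    Codisjoint (range φ) (ker φ) ↔ (range φ).map φ = range φ := by
  refine ⟨fun h ↦ le_antisymm map_le_range ?_, fun h ↦ ?_⟩
  · rintro _ ⟨v, rfl⟩
    obtain ⟨r, hr, k, hk, rfl⟩ := mem_sup.mp (h.eq_top ▸ mem_top : v ∈ range φ ⊔ ker φ)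
    exact ⟨r, hr, by rw [map_add, mem_ker.mp hk, add_zero]⟩
  · rw [codisjoint_iff, eq_top_iff']
    intro v
    obtain ⟨u, hu, huv⟩ := h.symm ▸ mem_range_self φ v
    exact mem_sup.mpr ⟨u, hu, v - u, by rw [mem_ker, map_sub, huv, sub_self], by abel⟩

theorem map_pow_range_eq_of_map_range_eq (h : (range φ).map φ = range φ) (n : ℕ) :
    (range φ).map (φ ^ n) = range φ := by
  induction n with
  | zero => simp [Module.End.one_eq_id]
  | succ n ih => rw [pow_succ, Module.End.mul_eq_comp, map_comp, h, ih]

end Ring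

section Field

variable {K V : Type*} [Field K] [AddCommGroup V] [Module K V] (φ : V →ₗ[K] V)

theorem finiteDimensional_range_of_map_range_eq
    (hfp : ∃ n : ℕ, FiniteDimensional K (range (φ ^ n))) (h : (range φ).map φ = range φ) :
    FiniteDimensional K (range φ) := by
  obtain ⟨n, hn⟩ := hfp
  exact finiteDimensional_of_le (map_pow_range_eq_of_map_range_eq φ h n ▸ map_le_range)

theorem isCompl_range_ker_of_map_range_eq [FiniteDimensional K (range φ)]
    (h : (range φ).map φ = range φ) : IsCompl (range φ) (ker φ) :=
  ⟨(injective_restrictRange_iff φ).mp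
      (injective_iff_surjective.mpr ((surjective_restrictRange_iff φ).mpr h)),
    (codisjoint_range_ker_iff_map_range_eq φ).mpr h⟩

end Field

end LinearMap

section InnerProductSpace

variable {𝕜 V : Type*} [RCLike 𝕜] [NormedAddCommGroup V] [InnerProductSpace 𝕜 V]

def IsCoreInverse (φ X : V →ₗ[𝕜] V) : Prop :=
  (∀ v : V, v - φ (X v) ∈ (range φ)ᗮ) ∧ range X ≤ range φ

variable {φ X : V →ₗ[𝕜] V}

theorem IsCoreInverse.apply_apply_of_mem_range (hX : IsCoreInverse φ X) {v : V}
    (hv : v ∈ range φ) : φ (X v) = v := by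
  have hperp : v - φ (X v) ∈ (range φ)ᗮ := hX.1 v
  have hmem : v - φ (X v) ∈ range φ := sub_mem hv (mem_range_self φ _)
  exact (sub_eq_zero.mp (inner_self_eq_zero.mp
    ((mem_orthogonal _ _).mp hperp _ hmem))).symm

theorem IsCoreInverse.map_range_eq (hX : IsCoreInverse φ X) : (range φ).map φ = range φ :=
  le_antisymm map_le_range fun v hv ↦
    ⟨X v, hX.2 (mem_range_self X v), hX.apply_apply_of_mem_range hv⟩

theorem exists_isCoreInverse_of_map_range_eq [(range φ).HasOrthogonalProjection]
    (h : (range φ).map φ = range φ) : ∃ X, IsCoreInverse φ X := by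
  obtain ⟨g, hg⟩ := φ.restrictRange.exists_rightInverse_of_surjective
    (range_eq_top.mpr ((surjective_restrictRange_iff φ).mpr h))
  refine ⟨(range φ).subtype ∘ₗ g ∘ₗ (range φ).orthogonalProjectionOnto.toLinearMap,
    fun v ↦ ?_, fun _ ⟨v, hv⟩ ↦ hv ▸ (g _).2⟩
  have hφX : φ (g ((range φ).orthogonalProjectionOnto v)) = (range φ).starProjection v :=
    congrArg Subtype.val (LinearMap.congr_fun hg _)
  simp only [LinearMap.comp_apply, ContinuousLinearMap.coe_coe, Submodule.subtype_apply, hφX]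
  exact sub_starProjection_mem_orthogonal v

end InnerProductSpace

theorem core_stmt6 {𝕜 : Type*} [RCLike 𝕜] {V : Type*} [NormedAddCommGroup V]
    [InnerProductSpace 𝕜 V] (φ : V →ₗ[𝕜] V)
    (hfp : ∃ n : ℕ, FiniteDimensional 𝕜 (LinearMap.range (φ ^ n))) :
    (∃ X : V →ₗ[𝕜] V, (∀ v : V, v - φ (X v) ∈ (LinearMap.range φ)ᗮ) ∧
        LinearMap.range X ≤ LinearMap.range φ) ↔
      IsCompl (LinearMap.range φ) (LinearMap.ker φ) := by
  show (∃ X, IsCoreInverse φ X) ↔ _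
  constructor
  · rintro ⟨X, hX⟩
    have := finiteDimensional_range_of_map_range_eq φ hfp hX.map_range_eq
    exact isCompl_range_ker_of_map_range_eq φ hX.map_range_eq
  · intro hc
    have h := (codisjoint_range_ker_iff_map_range_eq φ).mp hc.codisjoint
    have := finiteDimensional_range_of_map_range_eq φ hfp h
    exact exists_isCoreInverse_of_map_range_eq h
end

section
/- Let 𝕜 be ℝ or ℂ, V an inner product space over 𝕜, φ : V →ₗ[𝕜] V a finite potent endomorphism with index at most 1, and X a core inverse of φ. Suppose Y : V →ₗ[𝕜] V satisfies Y v = φ v for all v ∈ LinearMap.range φ and Y v = 0 for all v ∈ (LinearMap.range φ)ᗮ. Then Y is a Moore–Penrose inverse of X: X ∘ Y ∘ X = X, Y ∘ X ∘ Y = Y, and ⟪(X ∘ Y) u, w⟫ = ⟪u, (X ∘ Y) w⟫ and ⟪(Y ∘ X) u, w⟫ = ⟪u, (Y ∘ X) w⟫ for all u, w ∈ V. -/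
/-!
Write `R = range φ` and `P = φ ∘ X`. The core inverse conditions say that `P v ∈ R` and
`v - P v ⟂ R`, so `P` is the orthogonal projection onto `R`: it fixes `R` and is symmetric.
Since `R ∩ ker φ = 0`, `X` inverts `φ` on `R`, and splitting `v = P v + (v - P v)` gives
`Y = φ ∘ P`. Hence `X ∘ Y = Y ∘ X = P`, from which all four Penrose equations follow.
-/

open LinearMap
open scoped InnerProductSpace

section

variable {𝕜 V : Type*} [RCLike 𝕜] [NormedAddCommGroup V] [InnerProductSpace 𝕜 V]

namespace Submodule

variable {K : Submodule 𝕜 V} {P : V →ₗ[𝕜] V}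

theorem apply_eq_self_of_sub_mem_orthogonal (hP : ∀ v, P v ∈ K) (hPo : ∀ v, v - P v ∈ Kᗮ)
    {v : V} (hv : v ∈ K) : P v = v := by
  have h : v - P v ∈ K ⊓ Kᗮ := ⟨K.sub_mem hv (hP v), hPo v⟩
  rw [K.inf_orthogonal_eq_bot, Submodule.mem_bot, sub_eq_zero] at h
  exact h.symm

theorem isSymmetric_of_sub_mem_orthogonal (hP : ∀ v, P v ∈ K) (hPo : ∀ v, v - P v ∈ Kᗮ) :
    P.IsSymmetric := by
  intro u w
  have hu : ⟪u - P u, P w⟫_𝕜 = 0 := (K.mem_orthogonal' _).1 (hPo u) _ (hP w)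
  have hw : ⟪P u, w - P w⟫_𝕜 = 0 := (K.mem_orthogonal _).1 (hPo w) _ (hP u)
  rw [inner_sub_left, sub_eq_zero] at hu
  rw [inner_sub_right, sub_eq_zero] at hw
  rw [hw, hu]

end Submodule

namespace LinearMap

variable {φ X Y : V →ₗ[𝕜] V}

theorem apply_apply_eq_self_of_mem_range (hidx : Disjoint (range φ) (ker φ))
    (hX1 : ∀ v : V, v - φ (X v) ∈ (range φ)ᗮ) (hX2 : range X ≤ range φ)
    {v : V} (hv : v ∈ range φ) : X (φ v) = v := by
  have hfix : φ (X (φ v)) = φ v :=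
    Submodule.apply_eq_self_of_sub_mem_orthogonal (P := φ ∘ₗ X) (fun w => mem_range_self φ (X w))
      hX1 (mem_range_self φ v)
  have h : X (φ v) - v ∈ range φ ⊓ ker φ :=
    ⟨(range φ).sub_mem (hX2 (mem_range_self _ _)) hv, by
      rw [SetLike.mem_coe, mem_ker, map_sub, hfix, sub_self]⟩
  rwa [hidx.eq_bot, Submodule.mem_bot, sub_eq_zero] at h

theorem eq_comp_comp_of_eq_on_range_of_eq_zero_on_orthogonal
    (hX1 : ∀ v : V, v - φ (X v) ∈ (range φ)ᗮ)
    (hY1 : ∀ v ∈ range φ, Y v = φ v) (hY2 : ∀ v ∈ (range φ)ᗮ, Y v = 0) :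
    Y = φ ∘ₗ φ ∘ₗ X := by
  ext v
  calc Y v = Y (φ (X v)) + Y (v - φ (X v)) := by rw [← map_add, add_sub_cancel]
    _ = φ (φ (X v)) := by rw [hY1 _ (mem_range_self _ _), hY2 _ (hX1 v), add_zero]

end LinearMap

end

theorem core_stmt7_general {𝕜 : Type*} [RCLike 𝕜] {V : Type*} [NormedAddCommGroup V]
    [InnerProductSpace 𝕜 V] (φ X Y : V →ₗ[𝕜] V)
    (hidx : IsCompl (LinearMap.range φ) (LinearMap.ker φ))
    (hX1 : ∀ v : V, v - φ (X v) ∈ (LinearMap.range φ)ᗮ)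
    (hX2 : LinearMap.range X ≤ LinearMap.range φ)
    (hY1 : ∀ v ∈ LinearMap.range φ, Y v = φ v)
    (hY2 : ∀ v ∈ (LinearMap.range φ)ᗮ, Y v = 0) :
    X ∘ₗ Y ∘ₗ X = X ∧ Y ∘ₗ X ∘ₗ Y = Y ∧
      (∀ u w : V, (inner 𝕜 ((X ∘ₗ Y) u) w : 𝕜) = inner 𝕜 u ((X ∘ₗ Y) w)) ∧
      (∀ u w : V, (inner 𝕜 ((Y ∘ₗ X) u) w : 𝕜) = inner 𝕜 u ((Y ∘ₗ X) w)) := by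
  have hXφ : ∀ v ∈ range φ, X (φ v) = v :=
    fun _ => apply_apply_eq_self_of_mem_range hidx.disjoint hX1 hX2
  have hY : Y = φ ∘ₗ φ ∘ₗ X := eq_comp_comp_of_eq_on_range_of_eq_zero_on_orthogonal hX1 hY1 hY2
  have hP : (φ ∘ₗ X).IsSymmetric :=
    Submodule.isSymmetric_of_sub_mem_orthogonal (fun w => mem_range_self φ (X w)) hX1
  have hYX : Y ∘ₗ X = φ ∘ₗ X := by
    ext v
    exact hY1 _ (hX2 (mem_range_self _ _))
  have hXY : X ∘ₗ Y = φ ∘ₗ X := by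
    ext v
    rw [hY]
    exact hXφ _ (mem_range_self _ _)
  refine ⟨?_, ?_, hXY ▸ hP, hYX ▸ hP⟩
  · rw [hYX]
    ext v
    exact hXφ _ (hX2 (mem_range_self _ _))
  · rw [hXY]
    ext v
    change Y (φ (X v)) = Y v
    rw [hY1 _ (mem_range_self _ _), hY]
    rfl

theorem core_stmt7 {𝕜 : Type*} [RCLike 𝕜] {V : Type*} [NormedAddCommGroup V]
    [InnerProductSpace 𝕜 V] (φ X Y : V →ₗ[𝕜] V)
    (hfp : ∃ n : ℕ, FiniteDimensional 𝕜 (LinearMap.range (φ ^ n)))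
    (hidx : IsCompl (LinearMap.range φ) (LinearMap.ker φ))
    (hX1 : ∀ v : V, v - φ (X v) ∈ (LinearMap.range φ)ᗮ)
    (hX2 : LinearMap.range X ≤ LinearMap.range φ)
    (hY1 : ∀ v ∈ LinearMap.range φ, Y v = φ v)
    (hY2 : ∀ v ∈ (LinearMap.range φ)ᗮ, Y v = 0) :
    X ∘ₗ Y ∘ₗ X = X ∧ Y ∘ₗ X ∘ₗ Y = Y ∧
      (∀ u w : V, (inner 𝕜 ((X ∘ₗ Y) u) w : 𝕜) = inner 𝕜 u ((X ∘ₗ Y) w)) ∧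
      (∀ u w : V, (inner 𝕜 ((Y ∘ₗ X) u) w : 𝕜) = inner 𝕜 u ((Y ∘ₗ X) w)) :=
  core_stmt7_general φ X Y hidx hX1 hX2 hY1 hY2
end

section
/- Let 𝕜 be ℝ or ℂ, V an inner product space over 𝕜, φ : V →ₗ[𝕜] V a finite potent endomorphism with index at most 1, and X a core inverse of φ. Suppose Y : V →ₗ[𝕜] V satisfies Y v = φ v for all v ∈ LinearMap.range φ and Y v = 0 for all v ∈ (LinearMap.range φ)ᗮ. Then Y is a core inverse of X: for every v ∈ V, v - X (Y v) ∈ (LinearMap.range X)ᗮ, and LinearMap.range Y ≤ LinearMap.range X. -/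
theorem core_stmt8 {𝕜 : Type*} [RCLike 𝕜] {V : Type*} [NormedAddCommGroup V]
    [InnerProductSpace 𝕜 V] (φ X Y : V →ₗ[𝕜] V)
    (hfp : ∃ n : ℕ, FiniteDimensional 𝕜 (LinearMap.range (φ ^ n)))
    (hidx : IsCompl (LinearMap.range φ) (LinearMap.ker φ))
    (hX1 : ∀ v : V, v - φ (X v) ∈ (LinearMap.range φ)ᗮ)
    (hX2 : LinearMap.range X ≤ LinearMap.range φ)
    (hY1 : ∀ v ∈ LinearMap.range φ, Y v = φ v)
    (hY2 : ∀ v ∈ (LinearMap.range φ)ᗮ, Y v = 0) :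
    (∀ v : V, v - X (Y v) ∈ (LinearMap.range X)ᗮ) ∧
      LinearMap.range Y ≤ LinearMap.range X := by
  set R := LinearMap.range φ with hR
  have hmap : Submodule.map φ R = R := by
    have h1 : Submodule.map φ (R ⊔ LinearMap.ker φ) = R := by
      rw [hidx.sup_eq_top, Submodule.map_top]
    rw [Submodule.map_sup] at h1
    have h2 : Submodule.map φ (LinearMap.ker φ) = ⊥ := by
      ext x
      simp only [Submodule.mem_map, LinearMap.mem_ker, Submodule.mem_bot]
      constructor
      · rintro ⟨y, hy, rfl⟩; exact hy
      · rintro rfl; exact ⟨0, by simp, by simp⟩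
    rwa [h2, sup_bot_eq] at h1
  have hpow : ∀ k : ℕ, LinearMap.range (φ ^ (k + 1)) = R := by
    intro k
    induction k with
    | zero => simp [R]
    | succ k ih =>
      rw [pow_succ', Module.End.mul_eq_comp, LinearMap.range_comp, ih, hmap]
  have hfin : FiniteDimensional 𝕜 R := by
    obtain ⟨n, hn⟩ := hfp
    have hle : LinearMap.range (φ ^ (n + 1)) ≤ LinearMap.range (φ ^ n) := by
      rw [pow_succ, Module.End.mul_eq_comp, LinearMap.range_comp]
      exact LinearMap.map_le_range
    rw [hpow n] at hle
    exact Submodule.finiteDimensional_of_le hle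
  haveI := hfin
  have hXid : ∀ r ∈ R, φ (X r) = r := by
    intro r hr
    have h1 : r - φ (X r) ∈ R := Submodule.sub_mem R hr ⟨X r, rfl⟩
    have h2 := hX1 r
    have := R.orthogonal_disjoint.le_bot ⟨h1, h2⟩
    rw [Submodule.mem_bot, sub_eq_zero] at this
    exact this.symm
  have hXφ : ∀ r ∈ R, X (φ r) = r := by
    intro r hr
    have h1 : φ (X (φ r) - r) = 0 := by
      rw [map_sub, hXid (φ r) ⟨r, rfl⟩, sub_self]
    have h2 : X (φ r) - r ∈ R := Submodule.sub_mem R (hX2 ⟨φ r, rfl⟩) hr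
    have := hidx.disjoint.le_bot ⟨h2, h1⟩
    rw [Submodule.mem_bot, sub_eq_zero] at this
    exact this
  have key : ∀ v : V, ∃ r ∈ R, Y v = φ r ∧ v - X (Y v) ∈ Rᗮ := by
    intro v
    obtain ⟨r, hr, w, hw, rfl⟩ := R.exists_add_mem_mem_orthogonal v
    have hYv : Y (r + w) = φ r := by
      rw [map_add, hY1 r hr, hY2 w hw, add_zero]
    refine ⟨r, hr, hYv, ?_⟩
    rw [hYv, hXφ r hr]
    simpa using hw
  constructor
  · intro v
    obtain ⟨r, hr, _, h⟩ := key v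
    exact Submodule.orthogonal_le hX2 h
  · rintro y ⟨v, rfl⟩
    obtain ⟨r, hr, hYv, -⟩ := key v
    refine ⟨φ (φ r), ?_⟩
    rw [hXφ (φ r) ⟨r, rfl⟩, hYv]
end

section
/- Let 𝕜 be ℝ or ℂ, V an inner product space over 𝕜, φ : V →ₗ[𝕜] V a finite potent endomorphism with index at most 1, and X a core inverse of φ. Then X is EP, i.e. LinearMap.ker X = (LinearMap.range X)ᗮ. -/
theorem core_stmt9 {𝕜 : Type*} [RCLike 𝕜] {V : Type*} [NormedAddCommGroup V]
    [InnerProductSpace 𝕜 V] (φ X : V →ₗ[𝕜] V)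
    (hfp : ∃ n : ℕ, FiniteDimensional 𝕜 (LinearMap.range (φ ^ n)))
    (hidx : IsCompl (LinearMap.range φ) (LinearMap.ker φ))
    (hX1 : ∀ v : V, v - φ (X v) ∈ (LinearMap.range φ)ᗮ)
    (hX2 : LinearMap.range X ≤ LinearMap.range φ) :
    LinearMap.ker X = (LinearMap.range X)ᗮ := by
  set W := LinearMap.range φ with hW
  -- φ maps W onto W
  have hmap : Submodule.map φ W = W := by
    have htop : W ⊔ LinearMap.ker φ = ⊤ := hidx.sup_eq_top
    have hk : Submodule.map φ (LinearMap.ker φ) = ⊥ := by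
      rw [Submodule.eq_bot_iff]
      rintro x ⟨y, hy, rfl⟩
      exact hy
    calc Submodule.map φ W = Submodule.map φ W ⊔ ⊥ := (sup_bot_eq _).symm
      _ = Submodule.map φ W ⊔ Submodule.map φ (LinearMap.ker φ) := by rw [hk]
      _ = Submodule.map φ (W ⊔ LinearMap.ker φ) := (Submodule.map_sup _ _ _).symm
      _ = Submodule.map φ ⊤ := by rw [htop]
      _ = W := by rw [Submodule.map_top]
  -- W is finite dimensional
  have hfd : FiniteDimensional 𝕜 W := by
    obtain ⟨n, hn⟩ := hfp
    cases n with
    | zero =>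
        have hn' : FiniteDimensional 𝕜 (⊤ : Submodule 𝕜 V) := by
          have h : LinearMap.range (φ ^ 0) = (⊤ : Submodule 𝕜 V) := by
            simp [Module.End.one_eq_id]
          rwa [h] at hn
        have : FiniteDimensional 𝕜 V :=
          (Submodule.topEquiv (R := 𝕜) (M := V)).finiteDimensional
        infer_instance
    | succ m =>
        have hr : ∀ k : ℕ, LinearMap.range (φ ^ (k + 1)) = W := by
          intro k
          induction k with
          | zero => simp [hW]
          | succ j ih =>
              rw [pow_succ', Module.End.mul_eq_comp, LinearMap.range_comp, ih, hmap]
        rwa [hr m] at hn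
  -- φ (X w) = w for w ∈ W
  have key1 : ∀ w ∈ W, φ (X w) = w := by
    intro w hw
    have h1 : w - φ (X w) ∈ Wᗮ := hX1 w
    have h2 : w - φ (X w) ∈ W := by
      exact Submodule.sub_mem _ hw (LinearMap.mem_range_self φ (X w))
    have h0 : w - φ (X w) = 0 :=
      (Submodule.disjoint_def.mp (Submodule.orthogonal_disjoint W)) _ h2 h1
    have := sub_eq_zero.mp h0
    exact this.symm
  -- Wᗮ ≤ ker X
  have hker1 : Wᗮ ≤ LinearMap.ker X := by
    intro u hu
    have h1 : u - φ (X u) ∈ Wᗮ := hX1 u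
    have h2 : φ (X u) ∈ Wᗮ := by
      have := Submodule.sub_mem _ hu h1
      simpa using this
    have h3 : φ (X u) ∈ W := LinearMap.mem_range_self φ (X u)
    have h4 : φ (X u) = 0 := (Submodule.disjoint_def.mp (Submodule.orthogonal_disjoint W)) _ h3 h2
    have h5 : X u ∈ LinearMap.ker φ := h4
    have h6 : X u ∈ W := hX2 (LinearMap.mem_range_self X u)
    have h7 : X u = 0 := (Submodule.disjoint_def.mp hidx.disjoint) _ h6 h5
    exact h7
  -- ker X ∩ W = 0 pieces, and orthogonal decomposition
  have hcompl : IsCompl W Wᗮ := Submodule.isCompl_orthogonal_of_hasOrthogonalProjection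
  have hkerX : LinearMap.ker X = Wᗮ := by
    apply le_antisymm _ hker1
    intro v hv
    have hsup : W ⊔ Wᗮ = ⊤ := hcompl.sup_eq_top
    have hv' : v ∈ W ⊔ Wᗮ := hsup ▸ Submodule.mem_top
    obtain ⟨w, hw, u, hu, rfl⟩ := Submodule.mem_sup.mp hv'
    have hXu : X u = 0 := hker1 hu
    have hXw : X w = 0 := by
      have : X (w + u) = 0 := hv
      rw [map_add, hXu, add_zero] at this
      exact this
    have hw0 : w = 0 := by
      have := key1 w hw
      rw [hXw, map_zero] at this
      exact this.symm
    rw [hw0, zero_add]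
    exact hu
  -- range X = W
  have hXmem : ∀ x ∈ W, X x ∈ W := fun x _ => hX2 (LinearMap.mem_range_self X x)
  have hrangeX : LinearMap.range X = W := by
    apply le_antisymm hX2
    intro w hw
    -- X restricted to W
    let g : W →ₗ[𝕜] W := X.restrict hXmem
    have hginj : Function.Injective g := by
      rw [← LinearMap.ker_eq_bot]
      rw [Submodule.eq_bot_iff]
      rintro ⟨x, hx⟩ hgx
      have hXx : X x = 0 := by
        have : (g ⟨x, hx⟩ : V) = 0 := by
          rw [hgx]; rfl
        simpa [g, LinearMap.restrict_apply] using this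
      have : φ (X x) = x := key1 x hx
      rw [hXx, map_zero] at this
      exact Subtype.ext this.symm
    have hgsurj : Function.Surjective g :=
      (LinearMap.injective_iff_surjective (f := g)).mp hginj
    obtain ⟨⟨w', hw'⟩, hgw⟩ := hgsurj ⟨w, hw⟩
    refine ⟨w', ?_⟩
    have : (g ⟨w', hw'⟩ : V) = w := by rw [hgw]
    simpa [g, LinearMap.restrict_apply] using this
  rw [hkerX, hrangeX]
end

section
/- Let 𝕜 be ℝ or ℂ, V an inner product space over 𝕜, φ : V →ₗ[𝕜] V a finite potent endomorphism with index at most 1, and X a core inverse of φ. Suppose Y : V →ₗ[𝕜] V satisfies Y v = φ v for all v ∈ LinearMap.range φ and Y v = 0 for all v ∈ (LinearMap.range φ)ᗮ. Then Y is a group inverse of X: X ∘ Y ∘ X = X, Y ∘ X ∘ Y = Y, and X ∘ Y = Y ∘ X. -/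
theorem core_stmt10 {𝕜 : Type*} [RCLike 𝕜] {V : Type*} [NormedAddCommGroup V]
    [InnerProductSpace 𝕜 V] (φ X Y : V →ₗ[𝕜] V)
    (hfp : ∃ n : ℕ, FiniteDimensional 𝕜 (LinearMap.range (φ ^ n)))
    (hidx : IsCompl (LinearMap.range φ) (LinearMap.ker φ))
    (hX1 : ∀ v : V, v - φ (X v) ∈ (LinearMap.range φ)ᗮ)
    (hX2 : LinearMap.range X ≤ LinearMap.range φ)
    (hY1 : ∀ v ∈ LinearMap.range φ, Y v = φ v)
    (hY2 : ∀ v ∈ (LinearMap.range φ)ᗮ, Y v = 0) :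
    X ∘ₗ Y ∘ₗ X = X ∧ Y ∘ₗ X ∘ₗ Y = Y ∧ X ∘ₗ Y = Y ∘ₗ X := by
  -- φ (X u) = u for u in range φ
  have hR : ∀ u ∈ LinearMap.range φ, φ (X u) = u := by
    intro u hu
    have h2 : u - φ (X u) ∈ LinearMap.range φ :=
      Submodule.sub_mem _ hu (LinearMap.mem_range_self φ (X u))
    have h0 : u - φ (X u) ∈ (⊥ : Submodule 𝕜 V) :=
      (Submodule.orthogonal_disjoint (LinearMap.range φ)).le_bot ⟨h2, hX1 u⟩
    have : u - φ (X u) = 0 := Submodule.mem_bot 𝕜 |>.mp h0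
    have := sub_eq_zero.mp this
    exact this.symm
  -- X (φ u) = u for u in range φ
  have hA : ∀ u ∈ LinearMap.range φ, X (φ u) = u := by
    intro u hu
    have h1 : X (φ u) - u ∈ LinearMap.ker φ := by
      have h := hR (φ u) (LinearMap.mem_range_self φ u)
      simp [LinearMap.mem_ker, map_sub, h]
    have h2 : X (φ u) - u ∈ LinearMap.range φ :=
      Submodule.sub_mem _ (hX2 (LinearMap.mem_range_self X (φ u))) hu
    have h0 : X (φ u) - u ∈ (⊥ : Submodule 𝕜 V) := hidx.disjoint.le_bot ⟨h2, h1⟩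
    have : X (φ u) - u = 0 := Submodule.mem_bot 𝕜 |>.mp h0
    exact sub_eq_zero.mp this
  have hYv : ∀ v, Y v = φ (φ (X v)) := by
    intro v
    have hsplit : Y v = Y (v - φ (X v)) + Y (φ (X v)) := by
      rw [← map_add, sub_add_cancel]
    rw [hsplit, hY2 _ (hX1 v), hY1 _ (LinearMap.mem_range_self φ (X v)), zero_add]
  refine ⟨?_, ?_, ?_⟩
  · ext v
    have hXv : X v ∈ LinearMap.range φ := hX2 (LinearMap.mem_range_self X v)
    simp only [LinearMap.comp_apply, LinearMap.coe_comp, Function.comp_apply]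
    rw [hY1 _ hXv, hA _ hXv]
  · ext v
    have hφXv : φ (X v) ∈ LinearMap.range φ := LinearMap.mem_range_self φ (X v)
    simp only [LinearMap.comp_apply, LinearMap.coe_comp, Function.comp_apply]
    rw [hYv v, hA _ hφXv, hY1 _ hφXv, ← hYv v]
  · ext v
    have hφXv : φ (X v) ∈ LinearMap.range φ := LinearMap.mem_range_self φ (X v)
    have hXv : X v ∈ LinearMap.range φ := hX2 (LinearMap.mem_range_self X v)
    simp only [LinearMap.comp_apply, LinearMap.coe_comp, Function.comp_apply]
    rw [hYv v, hA _ hφXv, hY1 _ hXv]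
end

section
/- Let 𝕜 be ℝ or ℂ, V an inner product space over 𝕜, φ : V →ₗ[𝕜] V a finite potent endomorphism with index at most 1, X a core inverse of φ, and χ a group inverse of φ. Then: (i) φ ∘ X ∘ φ = φ and X ∘ φ ∘ X = X; (ii) X ∘ X ∘ φ = χ; (iii) for every m ≥ 1, X^m is a core inverse of φ^m; (iv) X ∘ φ = χ ∘ φ. -/
theorem core_stmt11 {𝕜 : Type*} [RCLike 𝕜] {V : Type*} [NormedAddCommGroup V]
    [InnerProductSpace 𝕜 V] (φ X χ : V →ₗ[𝕜] V)
    (hfp : ∃ n : ℕ, FiniteDimensional 𝕜 (LinearMap.range (φ ^ n)))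
    (hidx : IsCompl (LinearMap.range φ) (LinearMap.ker φ))
    (hX1 : ∀ v : V, v - φ (X v) ∈ (LinearMap.range φ)ᗮ)
    (hX2 : LinearMap.range X ≤ LinearMap.range φ)
    (hg1 : φ ∘ₗ χ ∘ₗ φ = φ)
    (hg2 : χ ∘ₗ φ ∘ₗ χ = χ)
    (hg3 : φ ∘ₗ χ = χ ∘ₗ φ) :
    (φ ∘ₗ X ∘ₗ φ = φ ∧ X ∘ₗ φ ∘ₗ X = X) ∧
      X ∘ₗ X ∘ₗ φ = χ ∧
      (∀ m : ℕ, 1 ≤ m →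
        (∀ v : V, v - (φ ^ m) ((X ^ m) v) ∈ (LinearMap.range (φ ^ m))ᗮ) ∧
          LinearMap.range (X ^ m) ≤ LinearMap.range (φ ^ m)) ∧
      X ∘ₗ φ = χ ∘ₗ φ := by
  have hdis : Disjoint (LinearMap.range φ) ((LinearMap.range φ)ᗮ) :=
    Submodule.orthogonal_disjoint _
  have hXr : ∀ v : V, X v ∈ LinearMap.range φ :=
    fun v => hX2 (LinearMap.mem_range_self X v)
  -- φ ∘ X is identity on range φ
  have L1 : ∀ w ∈ LinearMap.range φ, φ (X w) = w := by
    intro w hw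
    have h2 : w - φ (X w) ∈ LinearMap.range φ :=
      Submodule.sub_mem _ hw (LinearMap.mem_range_self _ _)
    have h0 : w - φ (X w) = 0 := (Submodule.disjoint_def.mp hdis) _ h2 (hX1 w)
    exact (sub_eq_zero.mp h0).symm
  -- X ∘ φ is identity on range φ
  have L2 : ∀ w ∈ LinearMap.range φ, X (φ w) = w := by
    intro w hw
    have hk : X (φ w) - w ∈ LinearMap.ker φ := by
      simp [LinearMap.mem_ker, map_sub, L1 (φ w) (LinearMap.mem_range_self _ _)]
    have hr : X (φ w) - w ∈ LinearMap.range φ :=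
      Submodule.sub_mem _ (hXr _) hw
    have h0 : X (φ w) - w = 0 :=
      (Submodule.disjoint_def.mp hidx.disjoint) _ hr hk
    exact sub_eq_zero.mp h0
  have part1a : φ ∘ₗ X ∘ₗ φ = φ := by
    ext v; exact L1 (φ v) (LinearMap.mem_range_self _ _)
  have part1b : X ∘ₗ φ ∘ₗ X = X := by
    ext v; exact L2 (X v) (hXr v)
  -- range of χ lands in range of φ
  have hχr : ∀ v : V, χ v ∈ LinearMap.range φ := by
    intro v
    have h1 : χ (φ (χ v)) = χ v := LinearMap.congr_fun hg2 v
    have h2 : φ (χ (χ v)) = χ (φ (χ v)) := LinearMap.congr_fun hg3 (χ v)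
    exact ⟨χ (χ v), h2.trans h1⟩
  have part4 : X ∘ₗ φ = χ ∘ₗ φ := by
    ext v
    have ha : φ (X (φ v)) = φ v := L1 (φ v) (LinearMap.mem_range_self _ _)
    have hb : φ (χ (φ v)) = φ v := LinearMap.congr_fun hg1 v
    have hk : X (φ v) - χ (φ v) ∈ LinearMap.ker φ := by
      simp [LinearMap.mem_ker, map_sub, ha, hb]
    have hr : X (φ v) - χ (φ v) ∈ LinearMap.range φ :=
      Submodule.sub_mem _ (hXr _) (hχr _)
    have h0 : X (φ v) - χ (φ v) = 0 :=
      (Submodule.disjoint_def.mp hidx.disjoint) _ hr hk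
    exact sub_eq_zero.mp h0
  have part2 : X ∘ₗ X ∘ₗ φ = χ := by
    ext v
    have e1 : X (φ v) = χ (φ v) := LinearMap.congr_fun part4 v
    have e2 : φ (χ v) = χ (φ v) := LinearMap.congr_fun hg3 v
    have e3 : X (φ (χ v)) = χ (φ (χ v)) := LinearMap.congr_fun part4 (χ v)
    have e4 : χ (φ (χ v)) = χ v := LinearMap.congr_fun hg2 v
    calc X (X (φ v)) = X (χ (φ v)) := by rw [e1]
      _ = X (φ (χ v)) := by rw [e2]
      _ = χ (φ (χ v)) := e3
      _ = χ v := e4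
  -- key: φ^m ∘ X^m = φ ∘ X for m ≥ 1
  have hkey : ∀ m : ℕ, 1 ≤ m → ∀ v : V, (φ ^ m) ((X ^ m) v) = φ (X v) := by
    intro m
    induction m with
    | zero => omega
    | succ n ih =>
      intro _ v
      rcases Nat.eq_zero_or_pos n with hn | hn
      · subst hn; simp
      · have hXm : (X ^ n) v ∈ LinearMap.range φ := by
          obtain ⟨k, hk⟩ := Nat.exists_eq_add_of_le hn
          have : (X ^ n) v = X ((X ^ k) v) := by
            rw [hk, add_comm, pow_succ', Module.End.mul_apply]
          rw [this]; exact hXr _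
        have h1 : (X ^ (n + 1)) v = X ((X ^ n) v) := by
          rw [pow_succ', Module.End.mul_apply]
        have h2 : (φ ^ (n + 1)) (X ((X ^ n) v)) = (φ ^ n) (φ (X ((X ^ n) v))) := by
          rw [pow_succ, Module.End.mul_apply]
        rw [h1, h2, L1 _ hXm]
        have hφn : (φ ^ n) ((X ^ n) v) = φ (X v) := ih hn v
        exact hφn
  have hrange_le : ∀ m : ℕ, 1 ≤ m →
      LinearMap.range (φ ^ m) ≤ LinearMap.range φ := by
    intro m hm
    obtain ⟨k, hk⟩ := Nat.exists_eq_add_of_le hm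
    rintro w ⟨v, rfl⟩
    rw [hk, add_comm, pow_succ', Module.End.mul_apply]
    exact LinearMap.mem_range_self _ _
  have hrange_ge : ∀ m : ℕ, 1 ≤ m →
      LinearMap.range φ ≤ LinearMap.range (φ ^ m) := by
    intro m
    induction m with
    | zero => omega
    | succ n ih =>
      intro _ w hw
      rcases Nat.eq_zero_or_pos n with hn | hn
      · subst hn; simpa using hw
      · have hXw : X w ∈ LinearMap.range (φ ^ n) := ih hn (hXr w)
        obtain ⟨u, hu⟩ := hXw
        refine ⟨u, ?_⟩
        rw [pow_succ', Module.End.mul_apply, hu, L1 w hw]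
  have part3 : ∀ m : ℕ, 1 ≤ m →
      (∀ v : V, v - (φ ^ m) ((X ^ m) v) ∈ (LinearMap.range (φ ^ m))ᗮ) ∧
        LinearMap.range (X ^ m) ≤ LinearMap.range (φ ^ m) := by
    intro m hm
    constructor
    · intro v
      have := hX1 v
      rw [hkey m hm v]
      exact Submodule.orthogonal_le (hrange_le m hm) (hX1 v)
    · rintro w ⟨v, rfl⟩
      obtain ⟨k, hk⟩ := Nat.exists_eq_add_of_le hm
      have h1 : (X ^ m) v ∈ LinearMap.range φ := by
        rw [hk, add_comm, pow_succ', Module.End.mul_apply]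
        exact hXr _
      exact hrange_ge m hm h1
  exact ⟨⟨part1a, part1b⟩, part2, part3, part4⟩
end

section
/- Let 𝕜 be ℝ or ℂ, V an inner product space over 𝕜, φ : V →ₗ[𝕜] V a finite potent endomorphism with index at most 1, X a core inverse of φ, and χ a group inverse of φ. Then X = χ if and only if φ is EP, i.e. LinearMap.ker φ = (LinearMap.range φ)ᗮ. -/
theorem core_stmt12 {𝕜 : Type*} [RCLike 𝕜] {V : Type*} [NormedAddCommGroup V]
    [InnerProductSpace 𝕜 V] (φ X χ : V →ₗ[𝕜] V)
    (hfp : ∃ n : ℕ, FiniteDimensional 𝕜 (LinearMap.range (φ ^ n)))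
    (hidx : IsCompl (LinearMap.range φ) (LinearMap.ker φ))
    (hX1 : ∀ v : V, v - φ (X v) ∈ (LinearMap.range φ)ᗮ)
    (hX2 : LinearMap.range X ≤ LinearMap.range φ)
    (hg1 : φ ∘ₗ χ ∘ₗ φ = φ)
    (hg2 : χ ∘ₗ φ ∘ₗ χ = χ)
    (hg3 : φ ∘ₗ χ = χ ∘ₗ φ) :
    X = χ ↔ LinearMap.ker φ = (LinearMap.range φ)ᗮ := by
  have hg1' : ∀ v, φ (χ (φ v)) = φ v := fun v => LinearMap.ext_iff.mp hg1 v
  have hg2' : ∀ v, χ (φ (χ v)) = χ v := fun v => LinearMap.ext_iff.mp hg2 v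
  have hg3' : ∀ v, φ (χ v) = χ (φ v) := fun v => LinearMap.ext_iff.mp hg3 v
  have hzero : ∀ x : V, x ∈ LinearMap.range φ → x ∈ LinearMap.ker φ → x = 0 :=
    fun x hx hk => Submodule.disjoint_def.mp hidx.disjoint x hx hk
  have hχrange : ∀ v, χ v ∈ LinearMap.range φ := by
    intro v
    refine ⟨χ (χ v), ?_⟩
    rw [hg3', hg2']
  constructor
  · intro hXχ
    subst hXχ
    apply le_antisymm
    · intro k hk
      have hk0 : φ k = 0 := hk
      have hχφk : φ (X k) = 0 := by rw [hg3', hk0, map_zero]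
      have hχk : X k = 0 := by rw [← hg2' k, hχφk, map_zero]
      have := hX1 k
      rwa [hχk, map_zero, sub_zero] at this
    · intro w hw
      have h1 : φ (X w) ∈ (LinearMap.range φ)ᗮ := by
        have := Submodule.sub_mem _ hw (hX1 w)
        simpa using this
      have h2 : φ (X w) = 0 := by
        exact Submodule.disjoint_def.mp (Submodule.orthogonal_disjoint _).symm _ h1 ⟨X w, rfl⟩
      have h3 : X w = 0 := hzero _ (hX2 ⟨w, rfl⟩) h2
      show φ w = 0
      rw [← hg1' w, ← hg3', h3, map_zero, map_zero]
  · intro h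
    ext v
    have h1 : v - φ (X v) ∈ LinearMap.ker φ := h ▸ hX1 v
    have h2 : v - φ (χ v) ∈ LinearMap.ker φ := by
      show φ (v - φ (χ v)) = 0
      rw [map_sub, hg3', hg1', sub_self]
    have h3 : φ (X v) - φ (χ v) ∈ LinearMap.ker φ := by
      have := Submodule.sub_mem _ h2 h1
      simpa [sub_sub_sub_cancel_left] using this
    have h4 : φ (X v) = φ (χ v) := by
      have := hzero _ (Submodule.sub_mem _ ⟨X v, rfl⟩ ⟨χ v, rfl⟩) h3
      exact sub_eq_zero.mp this
    have h5 : X v - χ v ∈ LinearMap.ker φ := by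
      show φ (X v - χ v) = 0
      rw [map_sub, h4, sub_self]
    have h6 : X v - χ v ∈ LinearMap.range φ :=
      Submodule.sub_mem _ (hX2 ⟨v, rfl⟩) (hχrange v)
    exact sub_eq_zero.mp (hzero _ h6 h5)
end

section
/- Let 𝕜 be ℝ or ℂ, V an inner product space over 𝕜, φ : V →ₗ[𝕜] V a finite potent endomorphism with index at most 1, and X a core inverse of φ. Then: (I) X = 0 if and only if φ = 0; (II) for every v ∈ V, v - X v ∈ (LinearMap.range φ)ᗮ (i.e. X is the orthogonal projection onto the range of φ) if and only if φ ∘ φ = φ; (IV) X = φ if and only if φ^3 = φ and φ is EP (LinearMap.ker φ = (LinearMap.range φ)ᗮ). -/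
theorem core_stmt13 {𝕜 : Type*} [RCLike 𝕜] {V : Type*} [NormedAddCommGroup V]
    [InnerProductSpace 𝕜 V] (φ X : V →ₗ[𝕜] V)
    (hfp : ∃ n : ℕ, FiniteDimensional 𝕜 (LinearMap.range (φ ^ n)))
    (hidx : IsCompl (LinearMap.range φ) (LinearMap.ker φ))
    (hX1 : ∀ v : V, v - φ (X v) ∈ (LinearMap.range φ)ᗮ)
    (hX2 : LinearMap.range X ≤ LinearMap.range φ) :
    (X = 0 ↔ φ = 0) ∧
      ((∀ v : V, v - X v ∈ (LinearMap.range φ)ᗮ) ↔ φ ∘ₗ φ = φ) ∧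
      (X = φ ↔ (φ ^ 3 = φ ∧ LinearMap.ker φ = (LinearMap.range φ)ᗮ)) := by
  have hdisj : Disjoint (LinearMap.range φ) (LinearMap.range φ)ᗮ :=
    Submodule.orthogonal_disjoint _
  have hXmem : ∀ v : V, X v ∈ LinearMap.range φ := fun v => hX2 ⟨v, rfl⟩
  -- φ (X w) = w for w ∈ range φ
  have hfix : ∀ w, w ∈ LinearMap.range φ → φ (X w) = w := by
    intro w hw
    have h1 : w - φ (X w) ∈ LinearMap.range φ :=
      Submodule.sub_mem _ hw (LinearMap.mem_range_self φ (X w))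
    have h0 := Submodule.disjoint_def.mp hdisj _ h1 (hX1 w)
    have := sub_eq_zero.mp h0
    exact this.symm
  -- uniqueness of projections
  have huniq : ∀ (v a b : V), a ∈ LinearMap.range φ → b ∈ LinearMap.range φ →
      v - a ∈ (LinearMap.range φ)ᗮ → v - b ∈ (LinearMap.range φ)ᗮ → a = b := by
    intro v a b ha hb hva hvb
    have h1 : a - b ∈ LinearMap.range φ := Submodule.sub_mem _ ha hb
    have heq : (v - b) - (v - a) = a - b := by abel
    have h2 : a - b ∈ (LinearMap.range φ)ᗮ := by
      rw [← heq]; exact Submodule.sub_mem _ hvb hva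
    exact sub_eq_zero.mp (Submodule.disjoint_def.mp hdisj _ h1 h2)
  refine ⟨?_, ?_, ?_⟩
  · constructor
    · intro h
      ext u
      have hmem : φ u ∈ (LinearMap.range φ)ᗮ := by
        have := hX1 (φ u)
        simpa [h] using this
      have := Submodule.disjoint_def.mp hdisj _ (LinearMap.mem_range_self φ u) hmem
      simpa using this
    · intro h
      ext v
      have : X v ∈ LinearMap.range φ := hXmem v
      rw [h] at this
      simpa using this
  · constructor
    · intro hP
      ext u
      have hw : φ u ∈ LinearMap.range φ := LinearMap.mem_range_self φ u
      have hXw : X (φ u) = φ u :=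
        huniq (φ u) (X (φ u)) (φ u) (hXmem _) hw (hP (φ u)) (by simp)
      have := hfix (φ u) hw
      rw [hXw] at this
      simpa using this
    · intro hφ v
      obtain ⟨u, hu⟩ := hXmem v
      have : φ (X v) = X v := by
        rw [← hu]
        have := LinearMap.ext_iff.mp hφ u
        simpa using this
      have h := hX1 v
      rwa [this] at h
  · constructor
    · rintro rfl
      constructor
      · ext v
        have := hfix (X v) (LinearMap.mem_range_self X v)
        show (X * X * X) v = X v
        simpa [Module.End.mul_apply] using this
      · apply le_antisymm
        · intro u hu
          have h := hX1 u
          have hu0 : X u = 0 := hu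
          simpa [hu0] using h
        · intro u hu
          have h1 : X (X u) ∈ LinearMap.range X := LinearMap.mem_range_self X (X u)
          have heq : u - (u - X (X u)) = X (X u) := by abel
          have h2 : X (X u) ∈ (LinearMap.range X)ᗮ := by
            rw [← heq]; exact Submodule.sub_mem _ hu (hX1 u)
          have h3 : X (X u) = 0 := Submodule.disjoint_def.mp hdisj _ h1 h2
          have h4 : X u ∈ LinearMap.ker X := h3
          have h5 : X u ∈ LinearMap.range X := LinearMap.mem_range_self X u
          exact Submodule.disjoint_def.mp hidx.disjoint _ h5 h4
    · rintro ⟨h3, hEP⟩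
      ext v
      have hproj : v - φ (φ v) ∈ (LinearMap.range φ)ᗮ := by
        rw [← hEP]
        have : φ (v - φ (φ v)) = φ v - (φ * φ * φ) v := by
          simp [Module.End.mul_apply]
        have h3' : (φ * φ * φ) v = φ v := by
          have := LinearMap.ext_iff.mp h3 v
          simpa [pow_succ, Module.End.mul_apply] using this
        simp only [LinearMap.mem_ker, this, h3', sub_self]
      have heq1 : φ (X v) = φ (φ v) :=
        huniq v _ _ (LinearMap.mem_range_self φ (X v)) (LinearMap.mem_range_self φ (φ v))
          (hX1 v) hproj
      have hker : X v - φ v ∈ LinearMap.ker φ := by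
        simp [LinearMap.mem_ker, map_sub, heq1]
      have hrange : X v - φ v ∈ LinearMap.range φ :=
        Submodule.sub_mem _ (hXmem v) (LinearMap.mem_range_self φ v)
      exact sub_eq_zero.mp (Submodule.disjoint_def.mp hidx.disjoint _ hrange hker)
end

section
/- Let H be a complex Hilbert space and φ : H →L[ℂ] H a finite potent continuous linear operator with index at most 1 (IsCompl (LinearMap.range φ) (LinearMap.ker φ)). Then a continuous linear operator X : H →L[ℂ] H is a core inverse of φ (i.e. v - φ (X v) ∈ (LinearMap.range φ)ᗮ for all v and LinearMap.range X ≤ LinearMap.range φ) if and only if the following three conditions hold: (I) φ ∘ X ∘ φ = φ, (II) φ ∘ X ∘ X = X, and (III) (φ ∘ X)† = φ ∘ X, where † is the Hilbert adjoint. In particular such an X is unique. -/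
/-!
For a core inverse `X`, the operator `φ X` behaves like the orthogonal projection onto `range φ`
(whether or not that range is closed): `φ X v ∈ range φ` and `v - φ X v ⊥ range φ`. Such a
decomposition is unique, so `φ X` fixes `range φ` (giving (I) and, as `range X ≤ range φ`, (II)) and
is symmetric (III). Conversely, (III) together with (I) gives the orthogonality, and (II) the range
inclusion. Two core inverses have the same `φ X`, so their difference maps into
`range φ ⊓ ker φ = ⊥`.
-/

open scoped InnerProductSpace
open LinearMap (range ker)

section CoreInverse

variable {𝕜 E : Type*} [RCLike 𝕜] [NormedAddCommGroup E] [InnerProductSpace 𝕜 E]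

theorem Submodule.eq_of_sub_mem_orthogonal {K : Submodule 𝕜 E} {u₁ u₂ v : E}
    (h₁ : u₁ ∈ K) (h₂ : u₂ ∈ K) (hv₁ : v - u₁ ∈ Kᗮ) (hv₂ : v - u₂ ∈ Kᗮ) : u₁ = u₂ := by
  have h : u₂ - u₁ ∈ K ⊓ Kᗮ := ⟨sub_mem h₂ h₁, by simpa using sub_mem hv₁ hv₂⟩
  rw [K.inf_orthogonal_eq_bot, Submodule.mem_bot, sub_eq_zero] at h
  exact h.symm

theorem LinearMap.isSymmetric_of_mem_of_sub_mem_orthogonal {K : Submodule 𝕜 E} {P : E →ₗ[𝕜] E}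
    (hP : ∀ v, P v ∈ K) (hP' : ∀ v, v - P v ∈ Kᗮ) : P.IsSymmetric := fun x y =>
  calc ⟪P x, y⟫_𝕜 = ⟪P x, P y⟫_𝕜 + ⟪P x, y - P y⟫_𝕜 := by rw [inner_sub_right]; ring
    _ = ⟪P x, P y⟫_𝕜 := by rw [K.inner_right_of_mem_orthogonal (hP x) (hP' y), add_zero]
    _ = ⟪x - P x, P y⟫_𝕜 + ⟪P x, P y⟫_𝕜 := by
      rw [K.inner_left_of_mem_orthogonal (hP y) (hP' x), zero_add]
    _ = ⟪x, P y⟫_𝕜 := by rw [inner_sub_left]; ring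

theorem LinearMap.IsSymmetric.inner_sub_apply_eq_zero_of_apply_eq {P : E →ₗ[𝕜] E}
    (hP : P.IsSymmetric) {u : E} (hu : P u = u) (v : E) : ⟪u, v - P v⟫_𝕜 = 0 := by
  rw [inner_sub_right, ← hP, hu, sub_self]

namespace ContinuousLinearMap

def IsCoreInverse (φ X : E →L[𝕜] E) : Prop :=
  (∀ v, v - φ (X v) ∈ (range (φ : E →ₗ[𝕜] E))ᗮ) ∧ range (X : E →ₗ[𝕜] E) ≤ range (φ : E →ₗ[𝕜] E)

namespace IsCoreInverse

variable {φ X : E →L[𝕜] E} (h : IsCoreInverse φ X)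
include h

theorem apply_apply_of_mem_range {v : E} (hv : v ∈ range (φ : E →ₗ[𝕜] E)) : φ (X v) = v :=
  Submodule.eq_of_sub_mem_orthogonal (LinearMap.mem_range_self (φ : E →ₗ[𝕜] E) (X v)) hv (h.1 v)
    (by simp)

theorem comp_comp_self : φ ∘L X ∘L φ = φ :=
  ext fun v => h.apply_apply_of_mem_range ⟨v, rfl⟩

theorem comp_comp_right : φ ∘L X ∘L X = X :=
  ext fun v => h.apply_apply_of_mem_range (h.2 ⟨v, rfl⟩)

theorem isSymmetric_comp : ((φ ∘L X : E →L[𝕜] E) : E →ₗ[𝕜] E).IsSymmetric :=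
  LinearMap.isSymmetric_of_mem_of_sub_mem_orthogonal
    (fun v => LinearMap.mem_range_self (φ : E →ₗ[𝕜] E) (X v)) h.1

theorem unique (hφ : Disjoint (range (φ : E →ₗ[𝕜] E)) (ker (φ : E →ₗ[𝕜] E)))
    {X' : E →L[𝕜] E} (h' : IsCoreInverse φ X') : X = X' := by
  ext v
  have hφX : φ (X v) = φ (X' v) :=
    Submodule.eq_of_sub_mem_orthogonal (LinearMap.mem_range_self (φ : E →ₗ[𝕜] E) (X v))
      (LinearMap.mem_range_self (φ : E →ₗ[𝕜] E) (X' v)) (h.1 v) (h'.1 v)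
  have hmem : X v - X' v ∈ range (φ : E →ₗ[𝕜] E) ⊓ ker (φ : E →ₗ[𝕜] E) :=
    ⟨sub_mem (h.2 ⟨v, rfl⟩) (h'.2 ⟨v, rfl⟩), by simp [hφX]⟩
  rwa [hφ.eq_bot, Submodule.mem_bot, sub_eq_zero] at hmem

end IsCoreInverse

variable [CompleteSpace E]

theorem isCoreInverse_iff {φ X : E →L[𝕜] E} :
    IsCoreInverse φ X ↔ φ ∘L X ∘L φ = φ ∧ φ ∘L X ∘L X = X ∧ adjoint (φ ∘L X) = φ ∘L X := by
  refine ⟨fun h => ⟨h.comp_comp_self, h.comp_comp_right, ?_⟩, fun ⟨hI, hII, hIII⟩ => ⟨?_, ?_⟩⟩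
  · exact isSelfAdjoint_iff'.mp (isSelfAdjoint_iff_isSymmetric.mpr h.isSymmetric_comp)
  · have hsymm := isSelfAdjoint_iff_isSymmetric.mp (isSelfAdjoint_iff'.mpr hIII)
    intro v
    rw [Submodule.mem_orthogonal]
    rintro _ ⟨w, rfl⟩
    exact hsymm.inner_sub_apply_eq_zero_of_apply_eq (congr($hI w)) v
  · rintro _ ⟨v, rfl⟩
    exact ⟨X (X v), congr($hII v)⟩

end ContinuousLinearMap

end CoreInverse

theorem core_stmt14_general {H : Type*} [NormedAddCommGroup H] [InnerProductSpace ℂ H]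
    [CompleteSpace H] (φ : H →L[ℂ] H)
    (hidx : IsCompl (LinearMap.range (φ : H →ₗ[ℂ] H)) (LinearMap.ker (φ : H →ₗ[ℂ] H))) :
    (∀ X : H →L[ℂ] H,
      ((∀ v : H, v - φ (X v) ∈ (LinearMap.range (φ : H →ₗ[ℂ] H))ᗮ) ∧
          LinearMap.range (X : H →ₗ[ℂ] H) ≤ LinearMap.range (φ : H →ₗ[ℂ] H)) ↔
        (φ ∘L X ∘L φ = φ ∧ φ ∘L X ∘L X = X ∧
          ContinuousLinearMap.adjoint (φ ∘L X) = φ ∘L X)) ∧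
      ∀ X₁ X₂ : H →L[ℂ] H,
        ((∀ v : H, v - φ (X₁ v) ∈ (LinearMap.range (φ : H →ₗ[ℂ] H))ᗮ) ∧
            LinearMap.range (X₁ : H →ₗ[ℂ] H) ≤ LinearMap.range (φ : H →ₗ[ℂ] H)) →
        ((∀ v : H, v - φ (X₂ v) ∈ (LinearMap.range (φ : H →ₗ[ℂ] H))ᗮ) ∧
            LinearMap.range (X₂ : H →ₗ[ℂ] H) ≤ LinearMap.range (φ : H →ₗ[ℂ] H)) →
        X₁ = X₂ :=
  ⟨fun _ => ContinuousLinearMap.isCoreInverse_iff,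
    fun _ _ h₁ h₂ => ContinuousLinearMap.IsCoreInverse.unique h₁ hidx.disjoint h₂⟩

theorem core_stmt14 {H : Type*} [NormedAddCommGroup H] [InnerProductSpace ℂ H]
    [CompleteSpace H] (φ : H →L[ℂ] H)
    (hfp : ∃ n : ℕ, FiniteDimensional ℂ (LinearMap.range ((φ ^ n : H →L[ℂ] H) : H →ₗ[ℂ] H)))
    (hidx : IsCompl (LinearMap.range (φ : H →ₗ[ℂ] H)) (LinearMap.ker (φ : H →ₗ[ℂ] H))) :
    (∀ X : H →L[ℂ] H,
      ((∀ v : H, v - φ (X v) ∈ (LinearMap.range (φ : H →ₗ[ℂ] H))ᗮ) ∧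
          LinearMap.range (X : H →ₗ[ℂ] H) ≤ LinearMap.range (φ : H →ₗ[ℂ] H)) ↔
        (φ ∘L X ∘L φ = φ ∧ φ ∘L X ∘L X = X ∧
          ContinuousLinearMap.adjoint (φ ∘L X) = φ ∘L X)) ∧
      ∀ X₁ X₂ : H →L[ℂ] H,
        ((∀ v : H, v - φ (X₁ v) ∈ (LinearMap.range (φ : H →ₗ[ℂ] H))ᗮ) ∧
            LinearMap.range (X₁ : H →ₗ[ℂ] H) ≤ LinearMap.range (φ : H →ₗ[ℂ] H)) →
        ((∀ v : H, v - φ (X₂ v) ∈ (LinearMap.range (φ : H →ₗ[ℂ] H))ᗮ) ∧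
            LinearMap.range (X₂ : H →ₗ[ℂ] H) ≤ LinearMap.range (φ : H →ₗ[ℂ] H)) →
        X₁ = X₂ :=
  core_stmt14_general φ hidx
end

section
/- Let 𝕜 be ℝ or ℂ, V an inner product space over 𝕜, and let φ, ψ : V →ₗ[𝕜] V be finite potent endomorphisms, each with index at most 1. Let X be a core inverse of φ, and suppose φ is below ψ in the core order: φ ∘ X = ψ ∘ X and X ∘ φ = X ∘ ψ. Then LinearMap.range φ ≤ LinearMap.range ψ and LinearMap.ker ψ ≤ LinearMap.ker φ. -/
theorem core_stmt16 {𝕜 : Type*} [RCLike 𝕜] {V : Type*} [NormedAddCommGroup V]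
    [InnerProductSpace 𝕜 V] (φ ψ X : V →ₗ[𝕜] V)
    (hfpφ : ∃ n : ℕ, FiniteDimensional 𝕜 (LinearMap.range (φ ^ n)))
    (hidxφ : IsCompl (LinearMap.range φ) (LinearMap.ker φ))
    (hfpψ : ∃ n : ℕ, FiniteDimensional 𝕜 (LinearMap.range (ψ ^ n)))
    (hidxψ : IsCompl (LinearMap.range ψ) (LinearMap.ker ψ))
    (hX1 : ∀ v : V, v - φ (X v) ∈ (LinearMap.range φ)ᗮ)
    (hX2 : LinearMap.range X ≤ LinearMap.range φ)
    (hord1 : φ ∘ₗ X = ψ ∘ₗ X)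
    (hord2 : X ∘ₗ φ = X ∘ₗ ψ) :
    LinearMap.range φ ≤ LinearMap.range ψ ∧
      LinearMap.ker ψ ≤ LinearMap.ker φ := by
  have hdisj := (LinearMap.range φ).orthogonal_disjoint
  constructor
  · rintro w hw
    have h0 : w - φ (X w) = 0 := by
      refine Submodule.disjoint_def.mp hdisj _ ?_ (hX1 w)
      exact Submodule.sub_mem _ hw ⟨X w, rfl⟩
    have hw' : w = ψ (X w) := by
      have := congrFun (congrArg DFunLike.coe hord1) w
      simp only [LinearMap.comp_apply] at this
      rw [← this, ← sub_eq_zero.mp h0]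
    exact ⟨X w, hw'.symm⟩
  · intro v hv
    have hXφ : X (φ v) = 0 := by
      have := congrFun (congrArg DFunLike.coe hord2) v
      simp only [LinearMap.comp_apply] at this
      rw [this, LinearMap.mem_ker.mp hv, map_zero]
    have h1 := hX1 (φ v)
    rw [hXφ, map_zero, sub_zero] at h1
    exact Submodule.disjoint_def.mp hdisj _ ⟨v, rfl⟩ h1
end

section
/- Let 𝕜 be ℝ or ℂ, V an inner product space over 𝕜, and let φ, ψ : V →ₗ[𝕜] V be finite potent endomorphisms, each with index at most 1. Let X be a core inverse of φ and Y a core inverse of ψ. If φ ∘ X = ψ ∘ X, X ∘ φ = X ∘ ψ, ψ ∘ Y = φ ∘ Y and Y ∘ ψ = Y ∘ φ (i.e. φ is below ψ and ψ is below φ in the core order), then φ = ψ. -/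
theorem core_stmt18 {𝕜 : Type*} [RCLike 𝕜] {V : Type*} [NormedAddCommGroup V]
    [InnerProductSpace 𝕜 V] (φ ψ X Y : V →ₗ[𝕜] V)
    (hfpφ : ∃ n : ℕ, FiniteDimensional 𝕜 (LinearMap.range (φ ^ n)))
    (hidxφ : IsCompl (LinearMap.range φ) (LinearMap.ker φ))
    (hfpψ : ∃ n : ℕ, FiniteDimensional 𝕜 (LinearMap.range (ψ ^ n)))
    (hidxψ : IsCompl (LinearMap.range ψ) (LinearMap.ker ψ))
    (hX1 : ∀ v : V, v - φ (X v) ∈ (LinearMap.range φ)ᗮ)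
    (hX2 : LinearMap.range X ≤ LinearMap.range φ)
    (hY1 : ∀ v : V, v - ψ (Y v) ∈ (LinearMap.range ψ)ᗮ)
    (hY2 : LinearMap.range Y ≤ LinearMap.range ψ)
    (h1 : φ ∘ₗ X = ψ ∘ₗ X) (h2 : X ∘ₗ φ = X ∘ₗ ψ)
    (h3 : ψ ∘ₗ Y = φ ∘ₗ Y) (h4 : Y ∘ₗ ψ = Y ∘ₗ φ) :
    φ = ψ := by
  have keyφ : ∀ u ∈ LinearMap.range φ, φ (X u) = u := by
    intro u hu
    have hmem : u - φ (X u) ∈ LinearMap.range φ ⊓ (LinearMap.range φ)ᗮ :=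
      ⟨Submodule.sub_mem _ hu (LinearMap.mem_range_self φ (X u)), hX1 u⟩
    have h0 : u - φ (X u) ∈ (⊥ : Submodule 𝕜 V) :=
      (Submodule.orthogonal_disjoint (LinearMap.range φ)).le_bot hmem
    rw [Submodule.mem_bot, sub_eq_zero] at h0
    exact h0.symm
  have keyψ : ∀ u ∈ LinearMap.range ψ, ψ (Y u) = u := by
    intro u hu
    have hmem : u - ψ (Y u) ∈ LinearMap.range ψ ⊓ (LinearMap.range ψ)ᗮ :=
      ⟨Submodule.sub_mem _ hu (LinearMap.mem_range_self ψ (Y u)), hY1 u⟩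
    have h0 : u - ψ (Y u) ∈ (⊥ : Submodule 𝕜 V) :=
      (Submodule.orthogonal_disjoint (LinearMap.range ψ)).le_bot hmem
    rw [Submodule.mem_bot, sub_eq_zero] at h0
    exact h0.symm
  have hle : LinearMap.range ψ ≤ LinearMap.range φ := by
    intro w hw
    have := keyψ w hw
    have h3' : ψ (Y w) = φ (Y w) := congrArg (fun f => f w) h3
    exact ⟨Y w, by rw [← h3', this]⟩
  ext v
  have h2' : X (φ v) = X (ψ v) := congrArg (fun f => f v) h2
  calc φ v = φ (X (φ v)) := (keyφ _ (LinearMap.mem_range_self φ v)).symm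
    _ = φ (X (ψ v)) := by rw [h2']
    _ = ψ v := keyφ _ (hle (LinearMap.mem_range_self ψ v))
end

section
/- Let 𝕜 be ℝ or ℂ, V an inner product space over 𝕜, let φ, ψ : V →ₗ[𝕜] V be finite potent endomorphisms, each with index at most 1, let X be a core inverse of φ, and let μ be a Moore–Penrose inverse of φ. Then: (a) φ ∘ X = ψ ∘ X if and only if φ ∘ φ = ψ ∘ φ; and (b) X ∘ φ = X ∘ ψ if and only if μ ∘ φ = μ ∘ ψ. -/
/-!
Write `W = range φ`. Both `φ ∘ X` and `φ ∘ μ` are projections onto `W` with `v - P v ∈ Wᗮ`, so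
they coincide (with the orthogonal projection onto `W`). Since `W ⊓ ker φ = ⊥`, this gives
`X ∘ φ = id` on `W`, hence `range X = W`, and `ker X = ker (φ ∘ X) = ker (φ ∘ μ) = ker μ`.
Then (a) says that `φ - ψ` vanishes on `range X = range φ`, and (b) that `ker X = ker μ`
contains `range (φ - ψ)`.
-/

open LinearMap

namespace LinearMap

variable {R M N P : Type*} [Ring R] [AddCommGroup M] [Module R M] [AddCommGroup N]
  [Module R N] [AddCommGroup P] [Module R P]

theorem comp_eq_comp_iff_of_range_eq {A B : M →ₗ[R] N} (h : range A = range B)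
    {f g : N →ₗ[R] P} : f ∘ₗ A = g ∘ₗ A ↔ f ∘ₗ B = g ∘ₗ B := by
  rw [← sub_eq_zero, ← sub_comp, ← range_le_ker_iff, h, range_le_ker_iff, sub_comp, sub_eq_zero]

theorem comp_eq_comp_iff_of_ker_eq {A B : N →ₗ[R] P} (h : ker A = ker B)
    {f g : M →ₗ[R] N} : A ∘ₗ f = A ∘ₗ g ↔ B ∘ₗ f = B ∘ₗ g := by
  rw [← sub_eq_zero, ← comp_sub, ← range_le_ker_iff, h, range_le_ker_iff, comp_sub, sub_eq_zero]

theorem ker_comp_eq_of_disjoint {A : M →ₗ[R] N} {f : N →ₗ[R] P}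
    (h : Disjoint (range A) (ker f)) : ker (f ∘ₗ A) = ker A :=
  le_antisymm (fun v hv => Submodule.disjoint_def.mp h _ (mem_range_self A v) hv)
    (ker_le_ker_comp A f)

theorem ker_comp_eq_of_comp_comp_eq {A : M →ₗ[R] N} {f : N →ₗ[R] M}
    (h : A ∘ₗ f ∘ₗ A = A) : ker (f ∘ₗ A) = ker A := by
  refine le_antisymm (fun v hv => ?_) (ker_le_ker_comp A f)
  rw [mem_ker, ← h]
  simp only [comp_apply, mem_ker.mp hv, map_zero]

end LinearMap

section InnerProduct

variable {𝕜 V : Type*} [RCLike 𝕜] [NormedAddCommGroup V] [InnerProductSpace 𝕜 V]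

theorem Submodule.eq_of_sub_mem_orthogonal_s19 {K : Submodule 𝕜 V} {v x y : V} (hx : x ∈ K)
    (hy : y ∈ K) (hvx : v - x ∈ Kᗮ) (hvy : v - y ∈ Kᗮ) : x = y := by
  have hxy : x - y ∈ Kᗮ := by
    simpa using Submodule.sub_mem _ hvy hvx
  exact sub_eq_zero.mp
    (Submodule.disjoint_def.mp K.orthogonal_disjoint _ (K.sub_mem hx hy) hxy)

variable {φ X μ : V →ₗ[𝕜] V}

theorem sub_apply_moorePenrose_mem_orthogonal (hmp1 : φ ∘ₗ μ ∘ₗ φ = φ)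
    (hmp3 : ∀ u w : V, (inner 𝕜 ((φ ∘ₗ μ) u) w : 𝕜) = inner 𝕜 u ((φ ∘ₗ μ) w)) (v : V) :
    v - φ (μ v) ∈ (range φ)ᗮ := by
  rw [Submodule.mem_orthogonal]
  rintro _ ⟨w, rfl⟩
  have h := hmp3 (φ w) v
  rw [comp_apply, comp_apply, show φ (μ (φ w)) = φ w from congr($hmp1 w)] at h
  rw [inner_sub_right, h, sub_self]

theorem comp_coreInverse_eq_comp_moorePenrose (hX1 : ∀ v : V, v - φ (X v) ∈ (range φ)ᗮ)
    (hmp1 : φ ∘ₗ μ ∘ₗ φ = φ)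
    (hmp3 : ∀ u w : V, (inner 𝕜 ((φ ∘ₗ μ) u) w : 𝕜) = inner 𝕜 u ((φ ∘ₗ μ) w)) :
    φ ∘ₗ X = φ ∘ₗ μ :=
  LinearMap.ext fun v => Submodule.eq_of_sub_mem_orthogonal_s19 (mem_range_self φ _)
    (mem_range_self φ _) (hX1 v) (sub_apply_moorePenrose_mem_orthogonal hmp1 hmp3 v)

theorem coreInverse_apply_apply (hdisj : Disjoint (range φ) (ker φ))
    (hX2 : range X ≤ range φ) (hφXφ : φ ∘ₗ X ∘ₗ φ = φ) {w : V} (hw : w ∈ range φ) :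
    X (φ w) = w := by
  have hker : X (φ w) - w ∈ ker φ := by
    simpa [sub_eq_zero] using congr($hφXφ w)
  exact sub_eq_zero.mp (Submodule.disjoint_def.mp hdisj _
    ((range φ).sub_mem (hX2 (mem_range_self X _)) hw) hker)

theorem range_coreInverse (hdisj : Disjoint (range φ) (ker φ)) (hX2 : range X ≤ range φ)
    (hφXφ : φ ∘ₗ X ∘ₗ φ = φ) : range X = range φ :=
  le_antisymm hX2 fun w hw => ⟨φ w, coreInverse_apply_apply hdisj hX2 hφXφ hw⟩

end InnerProduct

theorem core_stmt19_general {𝕜 : Type*} [RCLike 𝕜] {V : Type*} [NormedAddCommGroup V]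
    [InnerProductSpace 𝕜 V] (φ ψ X μ : V →ₗ[𝕜] V)
    (hidxφ : IsCompl (LinearMap.range φ) (LinearMap.ker φ))
    (hX1 : ∀ v : V, v - φ (X v) ∈ (LinearMap.range φ)ᗮ)
    (hX2 : LinearMap.range X ≤ LinearMap.range φ)
    (hmp1 : φ ∘ₗ μ ∘ₗ φ = φ)
    (hmp2 : μ ∘ₗ φ ∘ₗ μ = μ)
    (hmp3 : ∀ u w : V, (inner 𝕜 ((φ ∘ₗ μ) u) w : 𝕜) = inner 𝕜 u ((φ ∘ₗ μ) w)) :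
    (φ ∘ₗ X = ψ ∘ₗ X ↔ φ ∘ₗ φ = ψ ∘ₗ φ) ∧
      (X ∘ₗ φ = X ∘ₗ ψ ↔ μ ∘ₗ φ = μ ∘ₗ ψ) := by
  have hφX : φ ∘ₗ X = φ ∘ₗ μ := comp_coreInverse_eq_comp_moorePenrose hX1 hmp1 hmp3
  have hφXφ : φ ∘ₗ X ∘ₗ φ = φ := by
    rw [← comp_assoc, hφX, comp_assoc, hmp1]
  have hrange : range X = range φ := range_coreInverse hidxφ.disjoint hX2 hφXφ
  have hker : ker X = ker μ := by
    rw [← ker_comp_eq_of_disjoint (hidxφ.disjoint.mono_left hX2), hφX,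
      ker_comp_eq_of_comp_comp_eq hmp2]
  exact ⟨comp_eq_comp_iff_of_range_eq hrange, comp_eq_comp_iff_of_ker_eq hker⟩

theorem core_stmt19 {𝕜 : Type*} [RCLike 𝕜] {V : Type*} [NormedAddCommGroup V]
    [InnerProductSpace 𝕜 V] (φ ψ X μ : V →ₗ[𝕜] V)
    (hfpφ : ∃ n : ℕ, FiniteDimensional 𝕜 (LinearMap.range (φ ^ n)))
    (hidxφ : IsCompl (LinearMap.range φ) (LinearMap.ker φ))
    (hfpψ : ∃ n : ℕ, FiniteDimensional 𝕜 (LinearMap.range (ψ ^ n)))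
    (hidxψ : IsCompl (LinearMap.range ψ) (LinearMap.ker ψ))
    (hX1 : ∀ v : V, v - φ (X v) ∈ (LinearMap.range φ)ᗮ)
    (hX2 : LinearMap.range X ≤ LinearMap.range φ)
    (hmp1 : φ ∘ₗ μ ∘ₗ φ = φ)
    (hmp2 : μ ∘ₗ φ ∘ₗ μ = μ)
    (hmp3 : ∀ u w : V, (inner 𝕜 ((φ ∘ₗ μ) u) w : 𝕜) = inner 𝕜 u ((φ ∘ₗ μ) w))
    (hmp4 : ∀ u w : V, (inner 𝕜 ((μ ∘ₗ φ) u) w : 𝕜) = inner 𝕜 u ((μ ∘ₗ φ) w)) :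
    (φ ∘ₗ X = ψ ∘ₗ X ↔ φ ∘ₗ φ = ψ ∘ₗ φ) ∧
      (X ∘ₗ φ = X ∘ₗ ψ ↔ μ ∘ₗ φ = μ ∘ₗ ψ) :=
  core_stmt19_general φ ψ X μ hidxφ hX1 hX2 hmp1 hmp2 hmp3
end
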